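/- arXiv:1309.5650 — 7 statements merged into one kernel-verified Lean document; each statement's English description precedes it below -/
import Mathlib

section
/- Let a < b be coprime positive integers. The simplicial complex Ass(a,b) is flag: if F is a set of a,b-admissible diagonals of P_{b+1} with |F| ≥ 2 such that every 2-element subset of F is a face of Ass(a,b), then F itself is a face of Ass(a,b). -/
/-- `S(a,b) = { ⌊ib/a⌋ : i = 1, …, a-1 }`. -/
def Sab (a b : ℕ) : Finset ℕ := (Finset.Icc 1 (a - 1)).image (fun i => i * b / a)

/-- A diagonal of the polygon `P_{b+1}` with boundary points `0, 1, …, b`: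
a pair `i < j` with `j - i ≥ 2` and `(i, j) ≠ (0, b)`. -/
def IsDiagonal (b i j : ℕ) : Prop := i + 2 ≤ j ∧ j ≤ b ∧ ¬(i = 0 ∧ j = b)

/-- A diagonal `ij` is `a,b`-admissible if it separates `j - i - 1` and `b - j + i`
boundary points, both of which lie in `S(a,b)`. -/
def Admissible (a b : ℕ) (d : ℕ × ℕ) : Prop :=
  IsDiagonal b d.1 d.2 ∧ d.2 - d.1 - 1 ∈ Sab a b ∧ b - d.2 + d.1 ∈ Sab a b

/-- Two diagonals `ij` and `km` cross if `i < k < j < m` or `k < i < m < j`. -/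
def Crosses (d d' : ℕ × ℕ) : Prop :=
  (d.1 < d'.1 ∧ d'.1 < d.2 ∧ d.2 < d'.2) ∨ (d'.1 < d.1 ∧ d.1 < d'.2 ∧ d'.2 < d.2)

/-- An `a,b`-Dyck path: a north/east lattice path from `(0,0)` to `(b,a)` staying weakly
above `y = (a/b) x`.  It is encoded by the height `h u` of its unique east step over the
column interval `[u, u+1]`, for `0 ≤ u < b`; we normalize `h u = a` for `u ≥ b`. -/
structure DyckPath (a b : ℕ) where
  h : ℕ → ℕ
  mono : Monotone h
  norm : ∀ x, b ≤ x → h x = a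
  above : ∀ x, x < b → a * (x + 1) ≤ b * h x

/-- The lattice point `(x, y)` lies on `D` at the bottom of a north step of `D`. -/
def BottomNorth (a b : ℕ) (D : DyckPath a b) (x y : ℕ) : Prop :=
  x ≤ b ∧ (if x = 0 then 0 else D.h (x - 1)) ≤ y ∧ y < D.h x

/-- The laser of slope `a/b` fired northeast from the lattice point `(x, y)` of `D` first
hits `D` in the interior of the east step whose right endpoint has `x`-coordinate `k`;
the associated laser diagonal is `d(P) = (x, k)`.  The laser passes strictly below the
right endpoint of every earlier east step and strictly above the one it hits. -/
def IsLaserDiag (a b : ℕ) (D : DyckPath a b) (x y k : ℕ) : Prop :=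
  x < k ∧ k ≤ b ∧ b * D.h (k - 1) < b * y + a * (k - x) ∧
    ∀ u, x ≤ u → u + 1 < k → b * y + a * (u + 1 - x) < b * D.h u

/-- `F(D)`: the set of laser diagonals `d(P)` of the lattice points `P ≠ (0,0)` at the
bottoms of north steps of `D`. -/
def FD (a b : ℕ) (D : DyckPath a b) : Set (ℕ × ℕ) :=
  { d | ∃ y, BottomNorth a b D d.1 y ∧ (d.1, y) ≠ (0, 0) ∧ IsLaserDiag a b D d.1 y d.2 }

/-- A finite abstract simplicial complex on the ground set `E`: a downward closed
collection of finite subsets of `E`. -/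
structure AbsCplx (E : Type*) where
  faces : Set (Finset E)
  down : ∀ F ∈ faces, ∀ F' ⊆ F, F' ∈ faces

/-- The rational associahedron `Âss(a,b)`: faces are the sets of pairwise noncrossing
`a,b`-admissible diagonals. -/
def hatAss (a b : ℕ) : AbsCplx (ℕ × ℕ) where
  faces := { F | (∀ d ∈ F, Admissible a b d) ∧ ∀ d ∈ F, ∀ d' ∈ F, ¬Crosses d d' }
  down := fun F hF F' hsub =>
    ⟨fun d hd => hF.1 d (hsub hd), fun d hd d' hd' => hF.2 d (hsub hd) d' (hsub hd')⟩

/-- The rational associahedron `Ass(a,b)`: faces are the subsets of the sets `F(D)`,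
as `D` ranges over `a,b`-Dyck paths. -/
def Ass (a b : ℕ) : AbsCplx (ℕ × ℕ) where
  faces := { F | ∃ D : DyckPath a b, ∀ d ∈ F, d ∈ FD a b D }
  down := fun F hF F' hsub =>
    let ⟨D, hD⟩ := hF
    ⟨D, fun d hd => hD d (hsub hd)⟩

/-!
A set `F` of admissible diagonals whose pairs are faces satisfies two pairwise conditions: no two
diagonals cross, and among diagonals with a common right endpoint the remainder of `a * len` modulo
`b` increases with the left endpoint, because it measures how far above the path the laser exits.

Conversely, for such `F` one Dyck path works for all diagonals at once. Give each diagonal `d` the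
least laser height compatible with the lasers of the diagonals before it (those starting further
left, or at the same point but longer), and take the lowest Dyck path passing strictly above all
these lasers. What has to be shown is that no laser then exits above a window containing it, the
window being the whole polygon or a diagonal of `F`. This goes by induction along the diagonals,
bounding each diagonal together with any chain of diagonals following it inside the window; the
step rests on the fact that the integer parts of the rises of the laser over consecutive pieces of
a window add up to less than the rise over the window, since their remainders add up to more.
-/

namespace RationalAssociahedron

/- The laser of slope `a / b` rises by `a * len d / b` over the diagonal `d`; `quo` and `rem` are
the quotient and the remainder of this division. -/

def len (d : ℕ × ℕ) : ℕ := d.2 - d.1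

def quo (a b : ℕ) (d : ℕ × ℕ) : ℕ := a * len d / b

def rem (a b : ℕ) (d : ℕ × ℕ) : ℕ := a * len d % b

/-- The height at column `x` of the lowest `a,b`-Dyck path. -/
def minHeight (a b x : ℕ) : ℕ := (a * x) ⌈/⌉ b

section Arithmetic

variable {a b : ℕ}

theorem mul_quo_add_rem (d : ℕ × ℕ) : b * quo a b d + rem a b d = a * len d :=
  Nat.div_add_mod _ _

theorem quo_zero_self (hb : 0 < b) : quo a b (0, b) = a := by
  simp [quo, len, hb]

theorem minHeight_le_iff (hb : 0 < b) {x y : ℕ} : minHeight a b x ≤ y ↔ a * x ≤ b * y :=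
  ceilDiv_le_iff_le_mul hb

theorem minHeight_mono (hb : 0 < b) : Monotone (minHeight a b) := fun _ _ hxy =>
  (minHeight_le_iff hb).2 <| (Nat.mul_le_mul_left a hxy).trans ((minHeight_le_iff hb).1 le_rfl)

theorem minHeight_le_of_le (hb : 0 < b) {x : ℕ} (hx : x ≤ b) : minHeight a b x ≤ a :=
  (minHeight_le_iff hb).2 (by rw [mul_comm b]; exact Nat.mul_le_mul_left a hx)

theorem le_minHeight (hb : 0 < b) {x : ℕ} (hx : b ≤ x) : a ≤ minHeight a b x := by
  refine Nat.le_of_mul_le_mul_left ?_ hb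
  rw [mul_comm b a]
  exact (Nat.mul_le_mul_left a hx).trans ((minHeight_le_iff hb).1 le_rfl)

theorem minHeight_add_div_le (hb : 0 < b) (x L : ℕ) :
    minHeight a b x + a * L / b ≤ minHeight a b (x + L) := by
  set c := minHeight a b (x + L)
  have hc : a * x + a * L ≤ b * c := by rw [← mul_add]; exact (minHeight_le_iff hb).1 le_rfl
  have hq : b * (a * L / b) ≤ a * L := Nat.mul_div_le (a * L) b
  have hqc : a * L / b ≤ c := Nat.le_of_mul_le_mul_left (by omega) hb
  have : minHeight a b x ≤ c - a * L / b :=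
    (minHeight_le_iff hb).2 (by rw [Nat.mul_sub]; omega)
  omega

end Arithmetic

section Necessity

variable {a b : ℕ}

theorem _root_.Admissible.rem_pos_and_lt (hcop : a.Coprime b) (hab : a < b) {d : ℕ × ℕ}
    (h : Admissible a b d) : 0 < rem a b d ∧ rem a b d < a := by
  obtain ⟨⟨hij, -⟩, hS, -⟩ := h
  obtain ⟨s, hs, hsd⟩ := Finset.mem_image.1 hS
  rw [Finset.mem_Icc] at hs
  have ht : 0 < s * b % a := by
    refine Nat.pos_of_ne_zero fun h0 => ?_
    have := Nat.le_of_dvd (by omega) (hcop.dvd_of_dvd_mul_right (Nat.dvd_of_mod_eq_zero h0))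
    omega
  have hta : s * b % a < a := Nat.mod_lt _ (by omega)
  have hlen : a * len d = b * s + (a - s * b % a) := by
    have := Nat.div_add_mod (s * b) a
    rw [hsd] at this
    have e : len d = d.2 - d.1 - 1 + 1 := by unfold len; omega
    rw [e, mul_add, mul_one, mul_comm b s]
    omega
  have : rem a b d = a - s * b % a := by
    rw [rem, hlen, Nat.mul_add_mod, Nat.mod_eq_of_lt (by omega)]
  omega

theorem _root_.IsLaserDiag.mul_add_lt_of_bottomNorth {D : DyckPath a b} {x y k x' y' : ℕ}
    (hl : IsLaserDiag a b D x y k) (hP : BottomNorth a b D x' y') (h1 : x < x') (h2 : x' < k) :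
    b * y + a * (x' - x) < b * y' := by
  have hbelow := hl.2.2.2 (x' - 1) (by omega) (by omega)
  have hbot : D.h (x' - 1) ≤ y' := by simpa [show x' ≠ 0 by omega] using hP.2.1
  rw [show x' - 1 + 1 = x' by omega] at hbelow
  exact hbelow.trans_le (Nat.mul_le_mul_left b hbot)

/-- The remainder of `(x, k)` is how far, scaled by `b`, the laser of `(x, y)` exits above the east
step it hits. -/
theorem _root_.IsLaserDiag.rem_add_mul_h (hab : a < b) {D : DyckPath a b} {x y k : ℕ}
    (hl : IsLaserDiag a b D x y k) (hxk : x + 2 ≤ k) :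
    rem a b (x, k) + b * D.h (k - 1) = b * y + a * (k - x) := by
  obtain ⟨-, -, hexit, hbelow⟩ := hl
  have hlast := hbelow (k - 2) (by omega) (by omega)
  have hmono : b * D.h (k - 2) ≤ b * D.h (k - 1) := Nat.mul_le_mul_left b (D.mono (by omega))
  have hsplit : a * (k - x) = a * (k - 2 + 1 - x) + a := by
    rw [show k - x = k - 2 + 1 - x + 1 by omega, mul_add, mul_one]
  set H := D.h (k - 1)
  have hy : y < H := Nat.lt_of_mul_lt_mul_left (a := b) (by omega)
  have hmul : b * (H - y) = b * H - b * y := Nat.mul_sub _ _ _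
  have hdecomp : a * (k - x) = b * (H - y) + (b * y + a * (k - x) - b * H) := by omega
  change a * (k - x) % b + b * H = _
  rw [hdecomp, Nat.mul_add_mod, Nat.mod_eq_of_lt (by omega)]
  omega

theorem not_crosses_of_mem_FD {D : DyckPath a b} {d e : ℕ × ℕ} (hd : d ∈ FD a b D)
    (he : e ∈ FD a b D) : ¬(d.1 < e.1 ∧ e.1 < d.2 ∧ d.2 < e.2) := by
  rintro ⟨h1, h2, h3⟩
  obtain ⟨y, -, -, hl⟩ := hd
  obtain ⟨y', hP', -, hl'⟩ := he
  have hstart := hl.mul_add_lt_of_bottomNorth hP' h1 h2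
  have hcross := hl'.2.2.2 (d.2 - 1) (by omega) (by omega)
  rw [show d.2 - 1 + 1 = d.2 by omega] at hcross
  have hsplit : a * (d.2 - d.1) = a * (e.1 - d.1) + a * (d.2 - e.1) := by
    rw [← mul_add]; congr 1; omega
  have := hl.2.2.1
  omega

theorem rem_lt_rem_of_mem_FD (hab : a < b) {D : DyckPath a b} {d e : ℕ × ℕ}
    (hd : d ∈ FD a b D) (he : e ∈ FD a b D) (hd2 : d.1 + 2 ≤ d.2) (he2 : e.1 + 2 ≤ e.2)
    (hsnd : d.2 = e.2) (hfst : d.1 < e.1) : rem a b d < rem a b e := by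
  obtain ⟨y, -, -, hl⟩ := hd
  obtain ⟨y', hP', -, hl'⟩ := he
  have hstart := hl.mul_add_lt_of_bottomNorth hP' hfst (by omega)
  have hd' := hl.rem_add_mul_h hab hd2
  have he' := hl'.rem_add_mul_h hab he2
  have hsplit : a * (d.2 - d.1) = a * (e.1 - d.1) + a * (d.2 - e.1) := by
    rw [← mul_add]; congr 1; omega
  simp only [Prod.mk.eta] at hd' he'
  rw [← hsnd] at he'
  omega

end Necessity

/-- Conditions satisfied by every set of admissible diagonals whose pairs are faces of `Ass(a,b)`,
and sufficient for it to be a face. -/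
structure Compatible (a b : ℕ) (F : Finset (ℕ × ℕ)) : Prop where
  two_le_len : ∀ d ∈ F, d.1 + 2 ≤ d.2
  snd_le : ∀ d ∈ F, d.2 ≤ b
  rem_pos : ∀ d ∈ F, 0 < rem a b d
  rem_lt : ∀ d ∈ F, rem a b d < a
  not_crosses : ∀ d ∈ F, ∀ e ∈ F, ¬Crosses d e
  rem_lt_rem : ∀ d ∈ F, ∀ e ∈ F, d.2 = e.2 → d.1 < e.1 → rem a b d < rem a b e

theorem compatible_of_pairs {a b : ℕ} (hab : a < b) (hcop : a.Coprime b) {F : Finset (ℕ × ℕ)}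
    (hadm : ∀ d ∈ F, Admissible a b d)
    (hpairs : ∀ d ∈ F, ∀ d' ∈ F, d ≠ d' → ({d, d'} : Finset (ℕ × ℕ)) ∈ (Ass a b).faces) :
    Compatible a b F := by
  have pair {d e : ℕ × ℕ} (hd : d ∈ F) (he : e ∈ F) (hne : d ≠ e) :
      ∃ D : DyckPath a b, d ∈ FD a b D ∧ e ∈ FD a b D := by
    obtain ⟨D, hD⟩ := hpairs d hd e he hne
    exact ⟨D, hD d (by simp), hD e (by simp)⟩
  refine ⟨fun d hd => (hadm d hd).1.1, fun d hd => (hadm d hd).1.2.1,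
    fun d hd => ((hadm d hd).rem_pos_and_lt hcop hab).1,
    fun d hd => ((hadm d hd).rem_pos_and_lt hcop hab).2, ?_, ?_⟩
  · intro d hd e he h
    obtain ⟨D, hdD, heD⟩ := pair hd he (by rintro rfl; unfold Crosses at h; omega)
    rcases h with h | h
    exacts [not_crosses_of_mem_FD hdD heD h, not_crosses_of_mem_FD heD hdD h]
  · intro d hd e he hsnd hfst
    obtain ⟨D, hdD, heD⟩ := pair hd he (by rintro rfl; omega)
    exact rem_lt_rem_of_mem_FD hab hdD heD (hadm d hd).1.1 (hadm e he).1.1 hsnd hfst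

/-- `T` lists diagonals of `F` from left to right, none overlapping the next, inside `[lo, hi]`. -/
def IsChainIn (F : Finset (ℕ × ℕ)) : ℕ → ℕ → List (ℕ × ℕ) → Prop
  | lo, hi, [] => lo ≤ hi
  | lo, hi, d :: T => d ∈ F ∧ lo ≤ d.1 ∧ IsChainIn F d.2 hi T

def sumLen (T : List (ℕ × ℕ)) : ℕ := (T.map len).sum

def sumQuo (a b : ℕ) (T : List (ℕ × ℕ)) : ℕ := (T.map (quo a b)).sum

def sumRem (a b : ℕ) (T : List (ℕ × ℕ)) : ℕ := (T.map (rem a b)).sum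

section Chains

variable {a b : ℕ} {F : Finset (ℕ × ℕ)}

@[simp] theorem sumLen_nil : sumLen [] = 0 := rfl

@[simp] theorem sumQuo_nil : sumQuo a b [] = 0 := rfl

@[simp] theorem sumLen_cons (d : ℕ × ℕ) (T : List (ℕ × ℕ)) : sumLen (d :: T) = len d + sumLen T :=
  List.sum_cons

@[simp] theorem sumQuo_cons (d : ℕ × ℕ) (T : List (ℕ × ℕ)) :
    sumQuo a b (d :: T) = quo a b d + sumQuo a b T :=
  List.sum_cons

@[simp] theorem sumRem_cons (d : ℕ × ℕ) (T : List (ℕ × ℕ)) :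
    sumRem a b (d :: T) = rem a b d + sumRem a b T :=
  List.sum_cons

theorem mul_sumQuo_add_sumRem (T : List (ℕ × ℕ)) :
    b * sumQuo a b T + sumRem a b T = a * sumLen T := by
  induction T with
  | nil => simp [sumRem]
  | cons d T ih =>
    have := mul_quo_add_rem (a := a) (b := b) d
    simp only [sumQuo_cons, sumRem_cons, sumLen_cons, mul_add]
    omega

theorem div_add_sumQuo_le {A B : ℕ} {T : List (ℕ × ℕ)} (h : A + sumLen T ≤ B) :
    a * A / b + sumQuo a b T ≤ a * B / b := by
  induction T generalizing A with
  | nil => simpa using Nat.div_le_div_right (Nat.mul_le_mul_left a (by simpa using h))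
  | cons d T ih =>
    have hstep : a * A / b + quo a b d ≤ a * (A + len d) / b := by
      rw [quo, mul_add]; exact Nat.div_add_div_le_add_div
    have := ih (A := A + len d) (by simp only [sumLen_cons] at h; omega)
    simp only [sumQuo_cons]
    omega

theorem sumQuo_le_div {B : ℕ} {T : List (ℕ × ℕ)} (h : sumLen T ≤ B) :
    sumQuo a b T ≤ a * B / b := by
  simpa using div_add_sumQuo_le (a := a) (b := b) (A := 0) (by simpa using h)

theorem minHeight_add_sumQuo_le (hb : 0 < b) (x : ℕ) (T : List (ℕ × ℕ)) :
    minHeight a b x + sumQuo a b T ≤ minHeight a b (x + sumLen T) := by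
  induction T generalizing x with
  | nil => simp
  | cons d T ih =>
    have := minHeight_add_div_le (a := a) hb x (len d)
    have := ih (x + len d)
    simp only [sumQuo_cons, sumLen_cons, quo, ← add_assoc] at *
    omega

theorem IsChainIn.split {lo hi mid : ℕ} {T : List (ℕ × ℕ)} (hT : IsChainIn F lo hi T)
    (hlo : lo ≤ mid) (hhi : mid ≤ hi) (hmid : ∀ x ∈ T, x.1 < mid → x.2 ≤ mid) :
    ∃ T₁ T₂, IsChainIn F lo mid T₁ ∧ IsChainIn F mid hi T₂ ∧
      sumQuo a b T = sumQuo a b T₁ + sumQuo a b T₂ := by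
  induction T generalizing lo with
  | nil => exact ⟨[], [], hlo, hhi, rfl⟩
  | cons d T ih =>
    obtain ⟨hd, hd1, hT⟩ := hT
    by_cases hc : d.1 < mid
    · have hd2 := hmid d List.mem_cons_self hc
      obtain ⟨T₁, T₂, h₁, h₂, hsum⟩ :=
        ih hT hd2 fun x hx => hmid x (List.mem_cons_of_mem d hx)
      exact ⟨d :: T₁, T₂, ⟨hd, hd1, h₁⟩, h₂, by simp [hsum, add_assoc]⟩
    · exact ⟨[], d :: T, hlo, ⟨hd, by omega, hT⟩, by simp⟩

end Chains

namespace Compatible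

variable {a b : ℕ} {F : Finset (ℕ × ℕ)}

theorem add_sumLen_le (hF : Compatible a b F) {lo hi : ℕ} {T : List (ℕ × ℕ)}
    (hT : IsChainIn F lo hi T) : lo + sumLen T ≤ hi := by
  induction T generalizing lo with
  | nil => simpa [IsChainIn] using hT
  | cons d T ih =>
    obtain ⟨hd, hd1, hT⟩ := hT
    have := hF.two_le_len d hd
    have := ih hT
    simp only [sumLen_cons, len]
    omega

theorem mem_of_isChainIn (hF : Compatible a b F) {lo hi : ℕ} {T : List (ℕ × ℕ)}
    (hT : IsChainIn F lo hi T) {x : ℕ × ℕ} (hx : x ∈ T) : x ∈ F ∧ lo ≤ x.1 := by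
  induction T generalizing lo with
  | nil => simp at hx
  | cons d T ih =>
    obtain ⟨hd, hd1, hT⟩ := hT
    rcases List.mem_cons.1 hx with rfl | hx
    · exact ⟨hd, hd1⟩
    · have hd2 := hF.two_le_len d hd
      obtain ⟨hxF, hx1⟩ := ih hT hx
      exact ⟨hxF, by omega⟩

theorem exists_mem_snd_eq (hF : Compatible a b F) {lo hi : ℕ} {T : List (ℕ × ℕ)}
    (hT : IsChainIn F lo hi T) (hne : T ≠ []) (htight : hi ≤ lo + sumLen T) :
    ∃ x ∈ T, x.2 = hi := by
  induction T generalizing lo with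
  | nil => exact absurd rfl hne
  | cons d T ih =>
    obtain ⟨hd, hd1, hT⟩ := hT
    have := hF.two_le_len d hd
    have := hF.add_sumLen_le hT
    simp only [sumLen_cons, len] at htight
    rcases T with _ | ⟨d', T'⟩
    · exact ⟨d, List.mem_cons_self, by simp at htight this; omega⟩
    · obtain ⟨x, hx, hx2⟩ := ih hT (List.cons_ne_nil _ _) (by omega)
      exact ⟨x, List.mem_cons_of_mem d hx, hx2⟩

theorem sumQuo_lt (hF : Compatible a b F) {lo : ℕ} {T : List (ℕ × ℕ)}
    (hT : IsChainIn F lo b T) (hne : T ≠ []) : sumQuo a b T < a := by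
  obtain ⟨d, T', rfl⟩ := List.exists_cons_of_ne_nil hne
  have hrem := hF.rem_pos d hT.1
  have hsum := mul_sumQuo_add_sumRem (a := a) (b := b) (d :: T')
  have hlen : a * sumLen (d :: T') ≤ a * b :=
    Nat.mul_le_mul_left a (by have := hF.add_sumLen_le hT; omega)
  simp only [sumRem_cons] at hsum
  by_contra! h
  have := Nat.mul_le_mul_left b h
  rw [mul_comm b a] at this
  omega

/-- The integer parts of the rises of the laser over `[w.1, m]` and over a chain in `[m, w.2]` add
up to less than the integer part of the rise over `w`: the remainders add up to more. -/
theorem one_add_div_add_sumQuo_le (hF : Compatible a b F) {w : ℕ × ℕ}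
    (hw : rem a b w < a) (hsnd : ∀ x ∈ F, x.2 = w.2 → w.1 < x.1 → rem a b w < rem a b x)
    {m : ℕ} (hm1 : w.1 < m) (hm2 : m < w.2) {T : List (ℕ × ℕ)} (hT : IsChainIn F m w.2 T) :
    1 + a * (m - w.1) / b + sumQuo a b T ≤ quo a b w := by
  have hlen := hF.add_sumLen_le hT
  obtain ⟨G, hG⟩ : ∃ G, G = w.2 - m - sumLen T := ⟨_, rfl⟩
  have hsplit : a * len w = a * (m - w.1) + a * sumLen T + a * G := by
    rw [← mul_add, ← mul_add]; unfold len; congr 1; omega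
  have hkey : rem a b w < sumRem a b T + a * G := by
    rcases Nat.eq_zero_or_pos G with hG0 | hG0
    · obtain ⟨x, hx, hx2⟩ := hF.exists_mem_snd_eq hT
        (by rintro rfl; simp at hG; omega) (by omega)
      obtain ⟨hxF, hx1⟩ := hF.mem_of_isChainIn hT hx
      have : rem a b x ≤ sumRem a b T := List.le_sum_of_mem (List.mem_map_of_mem hx)
      have := hsnd x hxF hx2 (by omega)
      omega
    · have := Nat.mul_le_mul_left a hG0
      omega
  have := mul_quo_add_rem (a := a) (b := b) w
  have := mul_sumQuo_add_sumRem (a := a) (b := b) T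
  have := Nat.div_add_mod (a * (m - w.1)) b
  by_contra! h
  have := Nat.mul_le_mul_left b (show quo a b w ≤ a * (m - w.1) / b + sumQuo a b T by omega)
  rw [mul_add] at this
  omega

theorem minHeight_add_sumQuo_le_of_isChainIn (hF : Compatible a b F) (hb : 0 < b) {lo hi : ℕ}
    {T : List (ℕ × ℕ)} (hT : IsChainIn F lo hi T) :
    minHeight a b lo + sumQuo a b T ≤ minHeight a b hi :=
  (minHeight_add_sumQuo_le hb lo T).trans (minHeight_mono hb (hF.add_sumLen_le hT))

end Compatible

/-- Diagonals are visited by increasing left endpoint, longer ones first. -/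
def rank (b : ℕ) (d : ℕ × ℕ) : ℕ := d.1 * (b + 1) + (b - d.2)

/-- The lower bound that the laser of `s`, fired at height `y`, imposes on the laser height of `d`
when `s` ends before `d` starts, passes over the start of `d`, or passes over the end of `d`. -/
def heightBound (a b y : ℕ) (s d : ℕ × ℕ) : ℕ :=
  max (max (if s.2 ≤ d.1 then y + quo a b s else 0)
    (if s.1 < d.1 ∧ d.2 ≤ s.2 then y + 1 + a * (d.1 - s.1) / b else 0))
    (if s.1 ≤ d.1 ∧ d.2 < s.2 then y + 1 + a * (d.2 - s.1) / b - quo a b d else 0)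

/-- The lower bound on the laser height of `d` coming from the lowest Dyck path at both ends
of `d`; the `1` keeps the laser off the origin. -/
def baseHeight (a b : ℕ) (d : ℕ × ℕ) : ℕ :=
  max (max 1 (minHeight a b d.1)) (minHeight a b d.2 - quo a b d)

/-- The laser heights of the Dyck path to be built: the least solution of the constraints
`heightBound` among the diagonals of `F`. -/
def height (a b : ℕ) (F : Finset (ℕ × ℕ)) (d : ℕ × ℕ) : ℕ :=
  max (baseHeight a b d)
    (F.sup fun s => if rank b s < rank b d then heightBound a b (height a b F s) s d else 0)
termination_by rank b d

section Heights

variable {a b : ℕ} {F : Finset (ℕ × ℕ)}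

theorem rank_lt_of_fst_lt {s d : ℕ × ℕ} (h : s.1 < d.1) : rank b s < rank b d := by
  have : (s.1 + 1) * (b + 1) ≤ d.1 * (b + 1) := Nat.mul_le_mul_right _ h
  rw [rank, rank]
  rw [add_mul, one_mul] at this
  omega

theorem rank_lt_of_fst_eq {s d : ℕ × ℕ} (h1 : s.1 = d.1) (h2 : d.2 < s.2) (h3 : s.2 ≤ b) :
    rank b s < rank b d := by
  rw [rank, rank, h1]
  omega

theorem baseHeight_le_height (d : ℕ × ℕ) : baseHeight a b d ≤ height a b F d := by
  rw [height]
  exact le_max_left _ _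

theorem one_le_height (d : ℕ × ℕ) : 1 ≤ height a b F d :=
  le_trans (by simp [baseHeight]) (baseHeight_le_height d)

theorem minHeight_fst_le_height (d : ℕ × ℕ) : minHeight a b d.1 ≤ height a b F d :=
  le_trans (by simp [baseHeight]) (baseHeight_le_height d)

theorem minHeight_snd_le_height_add_quo (d : ℕ × ℕ) :
    minHeight a b d.2 ≤ height a b F d + quo a b d := by
  have : minHeight a b d.2 - quo a b d ≤ height a b F d :=
    le_trans (by simp [baseHeight]) (baseHeight_le_height d)
  omega

end Heights

namespace Compatible

variable {a b : ℕ} {F : Finset (ℕ × ℕ)}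

theorem rank_lt_of_covers_snd (hF : Compatible a b F) {s d : ℕ × ℕ} (hs : s ∈ F)
    (h1 : s.1 ≤ d.1) (h2 : d.2 < s.2) : rank b s < rank b d := by
  rcases h1.lt_or_eq with h | h
  exacts [rank_lt_of_fst_lt h, rank_lt_of_fst_eq h h2 (hF.snd_le s hs)]

theorem height_eq (hF : Compatible a b F) (d : ℕ × ℕ) :
    height a b F d =
      max (baseHeight a b d) (F.sup fun s => heightBound a b (height a b F s) s d) := by
  rw [height]
  congr 1
  refine Finset.sup_congr rfl fun s hs => ?_
  split_ifs with h
  · rfl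
  have := hF.two_le_len s hs
  have h1 : ¬s.2 ≤ d.1 := fun h' => h (rank_lt_of_fst_lt (by omega))
  have h2 : ¬(s.1 < d.1 ∧ d.2 ≤ s.2) := fun h' => h (rank_lt_of_fst_lt h'.1)
  have h3 : ¬(s.1 ≤ d.1 ∧ d.2 < s.2) := fun h' => h (hF.rank_lt_of_covers_snd hs h'.1 h'.2)
  simp [heightBound, h1, h2, h3]

theorem heightBound_le_height (hF : Compatible a b F) {s : ℕ × ℕ} (hs : s ∈ F) (d : ℕ × ℕ) :
    heightBound a b (height a b F s) s d ≤ height a b F d := by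
  rw [hF.height_eq d]
  exact le_trans (Finset.le_sup (f := fun s => heightBound a b (height a b F s) s d) hs)
    (le_max_right _ _)

theorem height_add_quo_le_of_snd_le_fst (hF : Compatible a b F) {s d : ℕ × ℕ} (hs : s ∈ F)
    (h : s.2 ≤ d.1) : height a b F s + quo a b s ≤ height a b F d := by
  have := hF.heightBound_le_height hs d
  simp only [heightBound, if_pos h, max_le_iff] at this
  exact this.1.1

theorem height_add_div_lt_of_covers_fst (hF : Compatible a b F) {s d : ℕ × ℕ} (hs : s ∈ F)
    (h1 : s.1 < d.1) (h2 : d.2 ≤ s.2) :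
    height a b F s + a * (d.1 - s.1) / b < height a b F d := by
  have := hF.heightBound_le_height hs d
  simp only [heightBound, if_pos (And.intro h1 h2), max_le_iff] at this
  omega

theorem height_add_div_lt_of_covers_snd (hF : Compatible a b F) {s d : ℕ × ℕ} (hs : s ∈ F)
    (h1 : s.1 ≤ d.1) (h2 : d.2 < s.2) :
    height a b F s + a * (d.2 - s.1) / b < height a b F d + quo a b d := by
  have := hF.heightBound_le_height hs d
  simp only [heightBound, if_pos (And.intro h1 h2), max_le_iff] at this
  omega

theorem height_le (hF : Compatible a b F) {d : ℕ × ℕ} {N : ℕ} (hbase : baseHeight a b d ≤ N)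
    (hleft : ∀ s ∈ F, s.2 ≤ d.1 → height a b F s + quo a b s ≤ N)
    (hfst : ∀ s ∈ F, s.1 < d.1 → d.2 ≤ s.2 → height a b F s + a * (d.1 - s.1) / b < N)
    (hsnd : ∀ s ∈ F, s.1 ≤ d.1 → d.2 < s.2 →
      height a b F s + a * (d.2 - s.1) / b < N + quo a b d) :
    height a b F d ≤ N := by
  rw [hF.height_eq d]
  refine max_le hbase (Finset.sup_le fun s hs => ?_)
  simp only [heightBound]
  refine max_le (max_le ?_ ?_) ?_ <;> split_ifs with h
  · exact hleft s hs h
  · exact Nat.zero_le N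
  · have := hfst s hs h.1 h.2; omega
  · exact Nat.zero_le N
  · have := hsnd s hs h.1 h.2; omega
  · exact Nat.zero_le N

/-- The rises over `[s.1, d.1]` and over `d` round down to at least the rise over `s`, minus one. -/
theorem height_add_quo_le_of_snd_eq (hF : Compatible a b F) {s d : ℕ × ℕ} (hs : s ∈ F)
    (h1 : s.1 < d.1) (h2 : s.2 = d.2) :
    height a b F s + quo a b s ≤ height a b F d + quo a b d := by
  have hcov := hF.height_add_div_lt_of_covers_fst hs h1 h2.ge
  have hsplit : a * len s ≤ a * (d.1 - s.1) + a * len d := by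
    rw [← mul_add]; unfold len; gcongr; omega
  have := (Nat.div_le_div_right (c := b) hsplit).trans
    (Nat.add_div_le_div_add_div_add_one (a * (d.1 - s.1)) (a * len d) b)
  unfold quo
  omega

end Compatible

/-- A window `w` with laser height `Y`, under whose exit the diagonals of `F` inside `w` are
kept: either the whole polygon `(0, b)` at height `0`, or a diagonal of `F` at its own height.
The fields are the properties of these two cases that `Frame.bounded` uses. -/
structure Frame (a b : ℕ) (F : Finset (ℕ × ℕ)) where
  w : ℕ × ℕ
  Y : ℕ
  minHeight_le : minHeight a b w.2 ≤ Y + quo a b w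
  sumQuo_lt : ∀ lo T, w.1 ≤ lo → IsChainIn F lo w.2 T → T ≠ [] → sumQuo a b T < Y + quo a b w
  height_add_quo_le_of_snd_le_fst : ∀ s ∈ F, s.2 ≤ w.1 → height a b F s + quo a b s ≤ Y
  height_add_div_lt_of_covers_snd : ∀ s ∈ F, s.1 ≤ w.1 → w.2 < s.2 →
    height a b F s + a * (w.2 - s.1) / b < Y + quo a b w
  height_add_quo_le_of_snd_eq : ∀ s ∈ F, s.1 < w.1 → s.2 = w.2 →
    height a b F s + quo a b s ≤ Y + quo a b w
  not_crosses_fst : ∀ s ∈ F, ¬(s.1 < w.1 ∧ w.1 < s.2 ∧ s.2 < w.2)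
  not_crosses_snd : ∀ s ∈ F, ¬(w.1 < s.1 ∧ s.1 < w.2 ∧ w.2 < s.2)

namespace Frame

variable {a b : ℕ} {F : Finset (ℕ × ℕ)} (W : Frame a b F)

/-- The claim proved by induction in `Frame.bounded`; the chains following `s` are what make the
induction go through. -/
def Bounded (s : ℕ × ℕ) : Prop :=
  ∀ T, IsChainIn F s.2 W.w.2 T → height a b F s + quo a b s + sumQuo a b T ≤ W.Y + quo a b W.w

theorem baseHeight_add_le (hF : Compatible a b F) (hb : 0 < b) {e : ℕ × ℕ} (he : e ∈ F)
    (hI : W.w.1 ≤ e.1) {T : List (ℕ × ℕ)} (hT : IsChainIn F e.2 W.w.2 T) :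
    baseHeight a b e + (quo a b e + sumQuo a b T) ≤ W.Y + quo a b W.w := by
  have hchain : IsChainIn F e.1 W.w.2 (e :: T) := ⟨he, le_rfl, hT⟩
  have h1 := W.sumQuo_lt e.1 (e :: T) hI hchain (List.cons_ne_nil _ _)
  have h2 := hF.minHeight_add_sumQuo_le_of_isChainIn hb hchain
  have h3 := hF.minHeight_add_sumQuo_le_of_isChainIn hb hT
  have := W.minHeight_le
  simp only [sumQuo_cons] at h1 h2
  suffices baseHeight a b e ≤ W.Y + quo a b W.w - (quo a b e + sumQuo a b T) by omega
  refine max_le (max_le ?_ ?_) ?_ <;> omega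

theorem height_add_quo_add_le_of_snd_le_fst (hF : Compatible a b F) {e : ℕ × ℕ} (he : e ∈ F)
    (hI : W.w.1 ≤ e.1) {T : List (ℕ × ℕ)} (hT : IsChainIn F e.2 W.w.2 T)
    (ih : ∀ s ∈ F, rank b s < rank b e → W.w.1 ≤ s.1 → W.Bounded s)
    {s : ℕ × ℕ} (hs : s ∈ F) (hse : s.2 ≤ e.1) :
    height a b F s + quo a b s + (quo a b e + sumQuo a b T) ≤ W.Y + quo a b W.w := by
  have hchain : IsChainIn F e.1 W.w.2 (e :: T) := ⟨he, le_rfl, hT⟩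
  have hlen := hF.add_sumLen_le hchain
  have := hF.two_le_len s hs
  have := hF.two_le_len e he
  rcases le_or_gt s.2 W.w.1 with hsI | hIs
  · have h1 := W.height_add_quo_le_of_snd_le_fst s hs hsI
    have h2 := sumQuo_le_div (a := a) (b := b) (B := W.w.2 - W.w.1) (T := e :: T) (by omega)
    simp only [sumQuo_cons] at h2
    exact add_le_add h1 h2
  · have hIs' : W.w.1 ≤ s.1 := by
      by_contra h
      simp only [sumLen_cons, len] at hlen
      exact W.not_crosses_fst s hs ⟨by omega, hIs, by omega⟩
    have := ih s hs (rank_lt_of_fst_lt (by omega)) hIs' (e :: T) ⟨he, hse, hT⟩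
    simp only [sumQuo_cons] at this
    omega

theorem height_add_div_add_sumQuo_lt (hF : Compatible a b F) {s : ℕ × ℕ} (hs : s ∈ F)
    {m : ℕ} (hsm : s.1 < m) (hms : m < s.2) (hIm : W.w.1 ≤ m)
    {T : List (ℕ × ℕ)} (hT : IsChainIn F m W.w.2 T) (hbounded : W.w.1 ≤ s.1 → W.Bounded s) :
    height a b F s + a * (m - s.1) / b + sumQuo a b T < W.Y + quo a b W.w := by
  have hlen := hF.add_sumLen_le hT
  have hrise {T' : List (ℕ × ℕ)} (hT' : IsChainIn F m s.2 T') :=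
    hF.one_add_div_add_sumQuo_le (hF.rem_lt s hs)
      (fun x hx h2 h1 => hF.rem_lt_rem s hs x hx h2.symm h1) hsm hms hT'
  rcases lt_or_ge W.w.2 s.2 with hJs | hsJ
  · have hsI : s.1 ≤ W.w.1 := by
      by_contra h
      exact W.not_crosses_snd s hs ⟨by omega, by omega, hJs⟩
    have h1 := W.height_add_div_lt_of_covers_snd s hs hsI hJs
    have h2 := div_add_sumQuo_le (a := a) (b := b) (A := m - s.1) (B := W.w.2 - s.1) (T := T)
      (by omega)
    omega
  rcases lt_or_ge s.1 W.w.1 with hsI | hIs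
  · have hsJ' : s.2 = W.w.2 := by
      by_contra h
      exact W.not_crosses_fst s hs ⟨hsI, by omega, by omega⟩
    have h1 := W.height_add_quo_le_of_snd_eq s hs hsI hsJ'
    have h2 := hrise (hsJ' ▸ hT)
    omega
  · obtain ⟨T₁, T₂, h₁, h₂, hsum⟩ := hT.split (a := a) (b := b) hms.le hsJ fun x hx hx1 => by
      obtain ⟨hxF, hmx⟩ := hF.mem_of_isChainIn hT hx
      by_contra h
      exact hF.not_crosses s hs x hxF (Or.inl ⟨by omega, hx1, by omega⟩)
    have h1 := hrise h₁
    have h2 := hbounded hIs T₂ h₂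
    omega

theorem bounded_of_forall_rank_lt (hF : Compatible a b F) (hb : 0 < b) {e : ℕ × ℕ}
    (he : e ∈ F) (hI : W.w.1 ≤ e.1)
    (ih : ∀ s ∈ F, rank b s < rank b e → W.w.1 ≤ s.1 → W.Bounded s) : W.Bounded e := by
  intro T hT
  have hchain : IsChainIn F e.1 W.w.2 (e :: T) := ⟨he, le_rfl, hT⟩
  have hbase := W.baseHeight_add_le hF hb he hI hT
  have := hF.two_le_len e he
  suffices height a b F e ≤ W.Y + quo a b W.w - (quo a b e + sumQuo a b T) by omega
  apply hF.height_le
  · omega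
  · intro s hs hse
    have := W.height_add_quo_add_le_of_snd_le_fst hF he hI hT ih hs hse
    omega
  · intro s hs h1 h2
    have := W.height_add_div_add_sumQuo_lt hF hs h1 (by omega) hI hchain
      (ih s hs (rank_lt_of_fst_lt h1))
    simp only [sumQuo_cons] at this
    omega
  · intro s hs h1 h2
    have := W.height_add_div_add_sumQuo_lt hF hs (by omega) h2 (by omega) hT
      (ih s hs (hF.rank_lt_of_covers_snd hs h1 h2))
    omega

theorem bounded (hF : Compatible a b F) (hb : 0 < b) {e : ℕ × ℕ} (he : e ∈ F)
    (hI : W.w.1 ≤ e.1) : W.Bounded e := by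
  induction hn : rank b e using Nat.strong_induction_on generalizing e with
  | _ n ih =>
    exact W.bounded_of_forall_rank_lt hF hb he hI fun s hs hlt hsI =>
      ih _ (hn ▸ hlt) hs hsI rfl

def root (hF : Compatible a b F) (hb : 0 < b) : Frame a b F where
  w := (0, b)
  Y := 0
  minHeight_le := by rw [quo_zero_self hb, zero_add]; exact minHeight_le_of_le hb le_rfl
  sumQuo_lt _ _ _ hT hne := by rw [quo_zero_self hb, zero_add]; exact hF.sumQuo_lt hT hne
  height_add_quo_le_of_snd_le_fst s hs h := by have := hF.two_le_len s hs; simp at h; omega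
  height_add_div_lt_of_covers_snd s hs _ h := by have := hF.snd_le s hs; simp at h; omega
  height_add_quo_le_of_snd_eq _ _ h := by simp at h
  not_crosses_fst _ _ h := by simp at h
  not_crosses_snd s hs h := by have := hF.snd_le s hs; simp at h; omega

def ofMem (hF : Compatible a b F) {d : ℕ × ℕ} (hd : d ∈ F) : Frame a b F where
  w := d
  Y := height a b F d
  minHeight_le := minHeight_snd_le_height_add_quo d
  sumQuo_lt _ T hlo hT _ := by
    have := sumQuo_le_div (a := a) (b := b) (B := d.2 - d.1) (T := T)
      (by have := hF.add_sumLen_le hT; omega)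
    have := one_le_height (a := a) (b := b) (F := F) d
    rw [quo, len]
    omega
  height_add_quo_le_of_snd_le_fst _ hs h := hF.height_add_quo_le_of_snd_le_fst hs h
  height_add_div_lt_of_covers_snd _ hs h1 h2 := hF.height_add_div_lt_of_covers_snd hs h1 h2
  height_add_quo_le_of_snd_eq _ hs h1 h2 := hF.height_add_quo_le_of_snd_eq hs h1 h2
  not_crosses_fst s hs h := hF.not_crosses s hs d hd (Or.inl h)
  not_crosses_snd s hs h := hF.not_crosses d hd s hs (Or.inl h)

end Frame

namespace Compatible

variable {a b : ℕ} {F : Finset (ℕ × ℕ)}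

theorem height_add_quo_le (hF : Compatible a b F) (hb : 0 < b) {d : ℕ × ℕ}
    (hd : d ∈ F) : height a b F d + quo a b d ≤ a := by
  simpa [Frame.root, quo_zero_self hb] using
    (Frame.root hF hb).bounded hF hb hd (Nat.zero_le _) [] (hF.snd_le d hd)

theorem height_add_quo_le_of_nested (hF : Compatible a b F) (hb : 0 < b) {s d : ℕ × ℕ}
    (hs : s ∈ F) (hd : d ∈ F) (h1 : d.1 ≤ s.1) (h2 : s.2 ≤ d.2) :
    height a b F s + quo a b s ≤ height a b F d + quo a b d := by
  simpa [Frame.ofMem] using (Frame.ofMem hF hd).bounded hF hb hs h1 [] h2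

end Compatible

/-- The least height of an east step at column `u ≥ s.1` whose right end the laser of `s` passes
strictly under; from column `s.2 - 2` on this is the height at which the laser exits. -/
def laserBound (a b : ℕ) (F : Finset (ℕ × ℕ)) (s : ℕ × ℕ) (u : ℕ) : ℕ :=
  height a b F s + 1 + a * (min u (s.2 - 2) + 1 - s.1) / b

/-- The lowest Dyck path passing above the lasers of all the diagonals of `F`. -/
def pathHeight (a b : ℕ) (F : Finset (ℕ × ℕ)) (u : ℕ) : ℕ :=
  min a (max (minHeight a b (u + 1))
    (F.sup fun s => if s.1 ≤ u then laserBound a b F s u else 0))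

section Path

variable {a b : ℕ} {F : Finset (ℕ × ℕ)}

theorem pathHeight_mono (hb : 0 < b) : Monotone (pathHeight a b F) := by
  refine monotone_const.min (((minHeight_mono hb).comp fun _ _ h => Nat.succ_le_succ h).max ?_)
  intro u v huv
  refine Finset.sup_mono_fun fun s _ => ?_
  split_ifs with hu hv hv
  · unfold laserBound; gcongr
  · omega
  · exact Nat.zero_le _
  · exact le_rfl

theorem pathHeight_le {u N : ℕ} (h0 : minHeight a b (u + 1) ≤ N)
    (h : ∀ s ∈ F, s.1 ≤ u → laserBound a b F s u ≤ N) : pathHeight a b F u ≤ N :=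
  min_le_of_right_le <| max_le h0 <| Finset.sup_le fun s hs => by
    split_ifs with hu
    exacts [h s hs hu, Nat.zero_le N]

def dyckPath (a b : ℕ) (F : Finset (ℕ × ℕ)) (hb : 0 < b) : DyckPath a b where
  h := pathHeight a b F
  mono := pathHeight_mono hb
  norm _ hx := min_eq_left (le_max_of_le_left (le_minHeight hb (by omega)))
  above x hx := by
    rw [pathHeight, ← Nat.mul_min_mul_left]
    refine le_min ?_ ((minHeight_le_iff hb).1 (le_max_left _ _))
    rw [mul_comm b]
    exact Nat.mul_le_mul_left a hx

@[simp] theorem dyckPath_h (hb : 0 < b) : (dyckPath a b F hb).h = pathHeight a b F := rfl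

end Path

namespace Compatible

variable {a b : ℕ} {F : Finset (ℕ × ℕ)}

theorem laserBound_le (hF : Compatible a b F) (hb : 0 < b) {s : ℕ × ℕ} (hs : s ∈ F) (u : ℕ) :
    laserBound a b F s u ≤ height a b F s + quo a b s := by
  have := hF.rem_lt s hs
  have := hF.two_le_len s hs
  have := mul_quo_add_rem (a := a) (b := b) s
  have hrise : a * (min u (s.2 - 2) + 1 - s.1) + a ≤ a * len s := by
    rw [← mul_add_one]; unfold len; gcongr; omega
  have : a * (min u (s.2 - 2) + 1 - s.1) / b < quo a b s :=
    (Nat.div_lt_iff_lt_mul hb).2 (by rw [mul_comm (quo a b s)]; omega)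
  unfold laserBound
  omega

theorem laserBound_le_pathHeight (hF : Compatible a b F) (hb : 0 < b)
    {s : ℕ × ℕ} (hs : s ∈ F) {u : ℕ} (hu : s.1 ≤ u) :
    laserBound a b F s u ≤ pathHeight a b F u :=
  le_min ((hF.laserBound_le hb hs u).trans (hF.height_add_quo_le hb hs))
    (le_max_of_le_right (Finset.le_sup_of_le hs (by simp [hu])))

theorem pathHeight_pred_fst_le (hF : Compatible a b F) (hb : 0 < b) {d : ℕ × ℕ} (hd : d ∈ F)
    (h0 : 0 < d.1) : pathHeight a b F (d.1 - 1) ≤ height a b F d := by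
  apply pathHeight_le
  · rw [Nat.sub_add_cancel h0]
    exact minHeight_fst_le_height d
  intro s hs _
  rcases le_or_gt s.2 d.1 with hsd | hds
  · exact (hF.laserBound_le hb hs _).trans (hF.height_add_quo_le_of_snd_le_fst hs hsd)
  have hcov : d.2 ≤ s.2 := by
    by_contra h
    exact hF.not_crosses s hs d hd (Or.inl ⟨by omega, hds, by omega⟩)
  have := hF.height_add_div_lt_of_covers_fst hs (by omega) hcov
  have hmin : min (d.1 - 1) (s.2 - 2) + 1 - s.1 = d.1 - s.1 := by
    have := hF.two_le_len d hd
    omega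
  rw [laserBound, hmin]
  omega

theorem height_lt_pathHeight (hF : Compatible a b F) (hb : 0 < b) {d : ℕ × ℕ}
    (hd : d ∈ F) : height a b F d < pathHeight a b F d.1 :=
  lt_of_lt_of_le (lt_add_of_lt_of_nonneg (Nat.lt_succ_self _) (Nat.zero_le _))
    (hF.laserBound_le_pathHeight hb hd le_rfl)

theorem pathHeight_pred_snd_le (hF : Compatible a b F) (hb : 0 < b) {d : ℕ × ℕ} (hd : d ∈ F) :
    pathHeight a b F (d.2 - 1) ≤ height a b F d + quo a b d := by
  have := hF.two_le_len d hd
  apply pathHeight_le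
  · rw [Nat.sub_add_cancel (by omega)]
    exact minHeight_snd_le_height_add_quo d
  intro s hs _
  have := hF.two_le_len s hs
  have hlaser := hF.laserBound_le hb hs (d.2 - 1)
  rcases lt_or_ge d.2 s.2 with hds | hsd
  · have hsd1 : s.1 ≤ d.1 := by
      by_contra h
      exact hF.not_crosses d hd s hs (Or.inl ⟨by omega, by omega, hds⟩)
    have := hF.height_add_div_lt_of_covers_snd hs hsd1 hds
    have hmin : min (d.2 - 1) (s.2 - 2) + 1 - s.1 = d.2 - s.1 := by omega
    rw [laserBound, hmin]
    omega
  rcases le_or_gt d.1 s.1 with hds1 | hsd1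
  · exact hlaser.trans (hF.height_add_quo_le_of_nested hb hs hd hds1 hsd)
  rcases le_or_gt s.2 d.1 with hleft | hds1
  · have := hF.height_add_quo_le_of_snd_le_fst hs hleft
    omega
  have hsnd : s.2 = d.2 := by
    by_contra h
    exact hF.not_crosses s hs d hd (Or.inl ⟨hsd1, hds1, by omega⟩)
  exact hlaser.trans (hF.height_add_quo_le_of_snd_eq hs hsd1 hsnd)

theorem mul_add_lt_mul_pathHeight (hF : Compatible a b F) (hb : 0 < b)
    {d : ℕ × ℕ} (hd : d ∈ F) {u : ℕ} (hu1 : d.1 ≤ u) (hu2 : u + 1 < d.2) :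
    b * height a b F d + a * (u + 1 - d.1) < b * pathHeight a b F u := by
  have h := hF.laserBound_le_pathHeight hb hd hu1
  rw [laserBound, show min u (d.2 - 2) = u by omega] at h
  have := Nat.lt_mul_div_succ (a * (u + 1 - d.1)) hb
  have := Nat.mul_le_mul_left b h
  rw [add_assoc, add_comm 1, mul_add] at this
  omega

theorem mem_FD (hF : Compatible a b F) (hb : 0 < b) {d : ℕ × ℕ} (hd : d ∈ F) :
    d ∈ FD a b (dyckPath a b F hb) := by
  have := hF.two_le_len d hd
  have := hF.snd_le d hd
  have := one_le_height (a := a) (b := b) (F := F) d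
  refine ⟨height a b F d, ⟨by omega, ?_, ?_⟩, by simp; omega, by omega, by omega, ?_, ?_⟩
  · split_ifs with h0
    exacts [Nat.zero_le _, hF.pathHeight_pred_fst_le hb hd (by omega)]
  · exact hF.height_lt_pathHeight hb hd
  · have := Nat.mul_le_mul_left b (hF.pathHeight_pred_snd_le hb hd)
    have := mul_quo_add_rem (a := a) (b := b) d
    have := hF.rem_pos d hd
    rw [dyckPath_h, ← len]
    rw [mul_add] at *
    omega
  · intro u hu1 hu2
    exact hF.mul_add_lt_mul_pathHeight hb hd hu1 hu2

end Compatible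

end RationalAssociahedron

theorem Ass_flag_general (a b : ℕ) (hab : a < b) (hcop : Nat.Coprime a b)
    (F : Finset (ℕ × ℕ)) (hadm : ∀ d ∈ F, Admissible a b d)
    (hpairs : ∀ d ∈ F, ∀ d' ∈ F, d ≠ d' →
      ({d, d'} : Finset (ℕ × ℕ)) ∈ (Ass a b).faces) :
    F ∈ (Ass a b).faces := by
  have hb : 0 < b := Nat.zero_lt_of_lt hab
  have hF := RationalAssociahedron.compatible_of_pairs hab hcop hadm hpairs
  exact ⟨_, fun d hd => hF.mem_FD hb hd⟩

/-- `Ass(a,b)` is flag: if `F` is a set of `a,b`-admissible diagonals with `|F| ≥ 2`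
all of whose 2-element subsets are faces of `Ass(a,b)`, then `F` is a face of
`Ass(a,b)`. -/
theorem Ass_flag (a b : ℕ) (ha : 0 < a) (hab : a < b) (hcop : Nat.Coprime a b)
    (F : Finset (ℕ × ℕ)) (hadm : ∀ d ∈ F, Admissible a b d) (hcard : 2 ≤ F.card)
    (hpairs : ∀ d ∈ F, ∀ d' ∈ F, d ≠ d' →
      ({d, d'} : Finset (ℕ × ℕ)) ∈ (Ass a b).faces) :
    F ∈ (Ass a b).faces :=
  Ass_flag_general a b hab hcop F hadm hpairs
end

section
/- Let Δ be a finite abstract simplicial complex on a finite ground set E, let F be a face of Δ, and suppose there exists a cone vertex c ∈ E − F for F in Δ. Then Δ collapses onto the deletion dl_Δ(F). -/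
/-- `Δ'` is obtained from `Δ` by an elementary collapse: there is a facet `F` and a face
`F' ⊂ F` with `|F'| = |F| - 1` such that `F` is the unique face of `Δ` properly containing
`F'`, and `Δ' = Δ - {F, F'}`. -/
def IsElemCollapse {E : Type*} (Δ Δ' : AbsCplx E) : Prop :=
  ∃ F F' : Finset E, F ∈ Δ.faces ∧ F' ∈ Δ.faces ∧ F' ⊂ F ∧ F'.card + 1 = F.card ∧
    (∀ G ∈ Δ.faces, F ⊆ G → G = F) ∧
    (∀ G ∈ Δ.faces, F' ⊂ G → G = F) ∧
    Δ'.faces = Δ.faces \ {F, F'}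

/-- `Δ` collapses onto `Δ'` if `Δ'` is obtained from `Δ` by a finite sequence of
elementary collapses. -/
def CollapsesOnto {E : Type*} (Δ Δ' : AbsCplx E) : Prop :=
  Relation.ReflTransGen (fun X Y => IsElemCollapse X Y) Δ Δ'

/-- The deletion `dl_Δ(F)`: the faces of `Δ` not containing `F`. -/
def deletion {E : Type*} (Δ : AbsCplx E) (F : Finset E) : AbsCplx E where
  faces := { G | G ∈ Δ.faces ∧ ¬F ⊆ G }
  down := fun G hG G' hsub =>
    ⟨Δ.down G hG.1 G' hsub, fun hFG' => hG.2 (Finset.Subset.trans hFG' hsub)⟩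

/-! Pick a facet `G` containing `F`. Since `G ∪ {c}` is a face, `c ∈ G`, and every face
properly containing `G - c` also contains `F`, so adding `c` to it lands inside `G`: the pair
`(G, G - c)` is free. Collapsing it keeps `c` a cone vertex for `F` and does not touch the
deletion, so we repeat until no face contains `F`. -/

namespace AbsCplx

variable {E : Type*} {Δ : AbsCplx E}

theorem faces_injective : Function.Injective (faces : AbsCplx E → Set (Finset E)) := by
  rintro ⟨_, _⟩ ⟨_, _⟩ rfl
  rfl

theorem exists_facet_superset [Finite E] {G : Finset E} (hG : G ∈ Δ.faces) :
    ∃ H ∈ Δ.faces, G ⊆ H ∧ ∀ K ∈ Δ.faces, H ⊆ K → K = H := by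
  obtain ⟨H, hGH, hH⟩ := (Set.toFinite Δ.faces).exists_le_maximal hG
  exact ⟨H, hH.prop, hGH, fun K hK hHK => (hH.le_of_ge hK hHK).antisymm hHK⟩

theorem deletion_eq_self {F : Finset E} (hF : ∀ G ∈ Δ.faces, ¬F ⊆ G) : deletion Δ F = Δ :=
  faces_injective (Set.ext fun G => ⟨And.left, fun hG => ⟨hG, hF G hG⟩⟩)

structure IsFreePair (Δ : AbsCplx E) (G G' : Finset E) : Prop where
  left_mem : G ∈ Δ.faces
  ssubset : G' ⊂ G
  card_add_one : G'.card + 1 = G.card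
  eq_of_subset : ∀ H ∈ Δ.faces, G ⊆ H → H = G
  eq_of_ssubset : ∀ H ∈ Δ.faces, G' ⊂ H → H = G

namespace IsFreePair

variable {G G' : Finset E}

theorem right_mem (h : Δ.IsFreePair G G') : G' ∈ Δ.faces :=
  Δ.down G h.left_mem G' h.ssubset.subset

def collapse (h : Δ.IsFreePair G G') : AbsCplx E where
  faces := Δ.faces \ {G, G'}
  down := by
    rintro H ⟨hH, hHGG'⟩ H' hH'H
    simp only [Set.mem_sdiff, Set.mem_insert_iff, Set.mem_singleton_iff, not_or] at hHGG' ⊢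
    refine ⟨Δ.down H hH H' hH'H, ?_, ?_⟩
    · rintro rfl
      exact hHGG'.1 (h.eq_of_subset H hH hH'H)
    · rintro rfl
      exact hHGG'.1 (h.eq_of_ssubset H hH (hH'H.ssubset_of_ne (Ne.symm hHGG'.2)))

theorem isElemCollapse (h : Δ.IsFreePair G G') : IsElemCollapse Δ h.collapse :=
  ⟨G, G', h.left_mem, h.right_mem, h.ssubset, h.card_add_one, h.eq_of_subset, h.eq_of_ssubset, rfl⟩

theorem ncard_faces_collapse_lt [Finite E] (h : Δ.IsFreePair G G') :
    h.collapse.faces.ncard < Δ.faces.ncard :=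
  Set.ncard_lt_ncard (Set.sdiff_ssubset_left_iff.2 ⟨G, h.left_mem, Set.mem_insert G _⟩)

theorem deletion_collapse {F : Finset E} (h : Δ.IsFreePair G G') (hF : F ⊆ G') :
    deletion h.collapse F = deletion Δ F := by
  refine faces_injective (Set.ext fun H => ⟨fun hH => ⟨hH.1.1, hH.2⟩, fun hH => ?_⟩)
  refine ⟨⟨hH.1, ?_⟩, hH.2⟩
  rintro (rfl | rfl)
  exacts [hH.2 (hF.trans h.ssubset.subset), hH.2 hF]

end IsFreePair

variable [DecidableEq E] {F G : Finset E} {c : E}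

theorem mem_of_cone_of_facet (hcone : ∀ H ∈ Δ.faces, F ⊆ H → insert c H ∈ Δ.faces)
    (hG : G ∈ Δ.faces) (hFG : F ⊆ G) (hfacet : ∀ H ∈ Δ.faces, G ⊆ H → H = G) : c ∈ G := by
  rw [← hfacet _ (hcone G hG hFG) (Finset.subset_insert c G)]
  exact Finset.mem_insert_self c G

theorem isFreePair_erase_of_cone (hcone : ∀ H ∈ Δ.faces, F ⊆ H → insert c H ∈ Δ.faces)
    (hcF : c ∉ F) (hG : G ∈ Δ.faces) (hFG : F ⊆ G)
    (hfacet : ∀ H ∈ Δ.faces, G ⊆ H → H = G) : Δ.IsFreePair G (G.erase c) := by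
  have hcG := mem_of_cone_of_facet hcone hG hFG hfacet
  have hFG' : F ⊆ G.erase c := Finset.subset_erase.2 ⟨hFG, hcF⟩
  refine ⟨hG, Finset.erase_ssubset hcG, Finset.card_erase_add_one hcG, hfacet, ?_⟩
  intro H hH hG'H
  have hGH : insert c H = G := hfacet _ (hcone H hH (hFG'.trans hG'H.subset)) <| by
    rw [← Finset.insert_erase hcG]
    exact Finset.insert_subset_insert c hG'H.subset
  refine Finset.eq_of_subset_of_card_le (hGH ▸ Finset.subset_insert c H) ?_
  have := Finset.card_lt_card hG'H
  rw [← Finset.card_erase_add_one hcG]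
  omega

theorem IsFreePair.cone_collapse (h : Δ.IsFreePair G (G.erase c))
    (hcone : ∀ H ∈ Δ.faces, F ⊆ H → insert c H ∈ Δ.faces) :
    ∀ H ∈ h.collapse.faces, F ⊆ H → insert c H ∈ h.collapse.faces := by
  rintro H ⟨hH, hHGG'⟩ hFH
  simp only [Set.mem_insert_iff, Set.mem_singleton_iff, not_or] at hHGG'
  refine ⟨hcone H hH hFH, ?_⟩
  rintro (hcHG | hcHG')
  · by_cases hcH : c ∈ H
    · exact hHGG'.1 (Finset.insert_eq_of_mem hcH ▸ hcHG)
    · exact hHGG'.2 (hcHG ▸ (Finset.erase_insert hcH).symm)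
  · exact Finset.notMem_erase c G (hcHG' ▸ Finset.mem_insert_self c H)

end AbsCplx

open AbsCplx in
theorem collapsesOnto_deletion_of_coneVertex_general {E : Type*} [Fintype E] [DecidableEq E]
    (Δ : AbsCplx E) (F : Finset E) (c : E) (hc : c ∉ F)
    (hcone : ∀ G ∈ Δ.faces, F ⊆ G → insert c G ∈ Δ.faces) :
    CollapsesOnto Δ (deletion Δ F) := by
  induction hn : Δ.faces.ncard using Nat.strong_induction_on generalizing Δ with
  | _ n ih =>
  by_cases hstar : ∃ G ∈ Δ.faces, F ⊆ G
  · obtain ⟨G₀, hG₀, hFG₀⟩ := hstar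
    obtain ⟨G, hG, hG₀G, hfacet⟩ := exists_facet_superset hG₀
    have hFG := hFG₀.trans hG₀G
    have hfree := isFreePair_erase_of_cone hcone hc hG hFG hfacet
    rw [← hfree.deletion_collapse (Finset.subset_erase.2 ⟨hFG, hc⟩)]
    exact .head hfree.isElemCollapse <|
      ih _ (hn ▸ hfree.ncard_faces_collapse_lt) _ (hfree.cone_collapse hcone) rfl
  · push Not at hstar
    rw [deletion_eq_self hstar]
    exact .refl

/-- Let `Δ` be a finite abstract simplicial complex on a finite ground set `E`, let `F`
be a face of `Δ`, and suppose there is a cone vertex `c ∈ E - F` for `F` in `Δ`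
(i.e. `G ∪ {c}` is a face for every face `G ⊇ F`).  Then `Δ` collapses onto the
deletion `dl_Δ(F)`. -/
theorem collapsesOnto_deletion_of_coneVertex {E : Type*} [Fintype E] [DecidableEq E]
    (Δ : AbsCplx E) (F : Finset E) (hF : F ∈ Δ.faces) (c : E) (hc : c ∉ F)
    (hcone : ∀ G ∈ Δ.faces, F ⊆ G → insert c G ∈ Δ.faces) :
    CollapsesOnto Δ (deletion Δ F) :=
  collapsesOnto_deletion_of_coneVertex_general Δ F c hc hcone
end

section
/- Let a < b be coprime positive integers and let F be a nonempty face of Ass(a,b). Then there exists a unique a,b-Dyck path D such that: (i) the set of x-coordinates of the vertical runs of D equals {0} ∪ { i : ij ∈ F for some j }, and (ii) for every i > 0 such that some diagonal ij lies in F, the lattice point at the bottom of the vertical run of D on the line x = i is a valley whose laser diagonal equals i j₀, where j₀ is maximal such that i j₀ ∈ F. Moreover, this path D satisfies F ⊆ F(D). -/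
/-- `D` has a (nonempty) vertical run of north steps on the line `x = x₀`. -/
def VerticalRunAt (a b : ℕ) (D : DyckPath a b) (x : ℕ) : Prop :=
  x ≤ b ∧ (if x = 0 then 0 else D.h (x - 1)) < D.h x

/-- `(x, D.h (x-1))` is a valley of `D`: it is immediately preceded by an east step and
immediately succeeded by a north step. -/
def IsValley (a b : ℕ) (D : DyckPath a b) (x : ℕ) : Prop :=
  1 ≤ x ∧ x ≤ b ∧ D.h (x - 1) < D.h x


-- ===== auxiliary development =====


theorem DyckPath.h_le (a b : ℕ) (D : DyckPath a b) (u : ℕ) : D.h u ≤ a := by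
  have h1 := D.mono (le_max_left u b)
  rwa [D.norm _ (le_max_right u b)] at h1

/-- The fundamental witness lemma: any laser satisfies an exact equation. -/
theorem witness_facts (a b : ℕ) (ha : 0 < a) (hab : a < b) (D : DyckPath a b)
    {x y j : ℕ} (hb : BottomNorth a b D x y) (hl : IsLaserDiag a b D x y j) :
    x + 2 ≤ j ∧ j ≤ b ∧
    b * y + a * (j - x) = b * D.h (j - 1) + (a * (j - x)) % b ∧
    1 ≤ (a * (j - x)) % b ∧ (a * (j - x)) % b < a := by
  obtain ⟨hxb, hylo, hyhi⟩ := hb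
  obtain ⟨hxj, hjb, hhit, hmiss⟩ := hl
  -- j ≥ x + 2
  have hx2 : x + 2 ≤ j := by
    by_contra hcon
    have hjx : j = x + 1 := by omega
    subst hjx
    have h1 : b * D.h x < b * y + a * 1 := by simpa using hhit
    have h2 : b * (y + 1) ≤ b * D.h x := Nat.mul_le_mul_left b hyhi
    have h3 : b * (y + 1) = b * y + b := by ring
    omega
  -- miss at u = j - 2
  have hm2 : b * y + a * (j - 1 - x) < b * D.h (j - 2) := by
    have := hmiss (j - 2) (by omega) (by omega)
    have he : j - 2 + 1 - x = j - 1 - x := by omega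
    rwa [he] at this
  have hmono : b * D.h (j - 2) ≤ b * D.h (j - 1) :=
    Nat.mul_le_mul_left b (D.mono (by omega))
  have hsplit : a * (j - x) = a * (j - 1 - x) + a := by
    have : j - x = (j - 1 - x) + 1 := by omega
    rw [this, Nat.mul_succ]
  -- so b * h(j-1) < b*y + a*(j-x) < b * h(j-1) + a
  have hlow : b * D.h (j - 1) < b * y + a * (j - x) := hhit
  have hhigh : b * y + a * (j - x) < b * D.h (j - 1) + a := by omega
  -- compute the remainder
  have hmod : (b * y + a * (j - x)) % b = (a * (j - x)) % b := by
    rw [Nat.mul_add_mod]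
  have hdm := Nat.div_add_mod (b * y + a * (j - x)) b
  have hBpos : 0 < b := by omega
  -- b * y + a * (j-x) = b * h(j-1) + e with 0 < e < a < b so the quotient is h(j-1)
  set M := b * y + a * (j - x) with hM
  have hq : M / b = D.h (j - 1) := by
    have h1 : D.h (j - 1) * b ≤ M := by
      rw [Nat.mul_comm]; omega
    have h2 : M < (D.h (j - 1) + 1) * b := by
      have : (D.h (j - 1) + 1) * b = b * D.h (j - 1) + b := by ring
      omega
    have := Nat.div_eq_of_lt_le h1 h2
    exact this
  have heq : M = b * D.h (j - 1) + (a * (j - x)) % b := by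
    have := Nat.div_add_mod M b
    rw [hq, hmod] at this
    omega
  refine ⟨hx2, hjb, heq, ?_, ?_⟩ <;> omega

/-- Laser diagonals of a fixed path do not cross. -/
theorem laser_noncross (a b : ℕ) (ha : 0 < a) (hab : a < b) (D : DyckPath a b)
    {i y j k z m : ℕ} (hb1 : BottomNorth a b D i y) (hl1 : IsLaserDiag a b D i y j)
    (hb2 : BottomNorth a b D k z) (hl2 : IsLaserDiag a b D k z m)
    (hik : i < k) (hkj : k < j) (hjm : j < m) : False := by
  have hhit1 : b * D.h (j - 1) < b * y + a * (j - i) := hl1.2.2.1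
  obtain ⟨_, _, _, hmiss1⟩ := hl1
  obtain ⟨_, _, _, hmiss2⟩ := hl2
  have h1 : b * y + a * (k - i) < b * D.h (k - 1) := by
    have := hmiss1 (k - 1) (by omega) (by omega)
    have he : k - 1 + 1 - i = k - i := by omega
    rwa [he] at this
  have h2 : b * D.h (k - 1) ≤ b * z := by
    have := hb2.2.1
    rw [if_neg (by omega : ¬ k = 0)] at this
    exact Nat.mul_le_mul_left b this
  have h3 : b * z + a * (j - k) < b * D.h (j - 1) := by
    have := hmiss2 (j - 1) (by omega) (by omega)
    have he : j - 1 + 1 - k = j - k := by omega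
    rwa [he] at this
  have hsplit : a * (j - k) + a * (k - i) = a * (j - i) := by
    rw [← Nat.mul_add]
    congr 1
    omega
  omega

/-- The key lemma: for nested laser diagonals sharing a right endpoint the
residue strictly increases with the left endpoint. -/
theorem laser_key (a b : ℕ) (ha : 0 < a) (hab : a < b) (D : DyckPath a b)
    {i y j k z : ℕ} (hb1 : BottomNorth a b D i y) (hl1 : IsLaserDiag a b D i y j)
    (hb2 : BottomNorth a b D k z) (hl2 : IsLaserDiag a b D k z j)
    (hik : i < k) : (a * (j - i)) % b < (a * (j - k)) % b := by
  have w1 := witness_facts a b ha hab D hb1 hl1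
  have w2 := witness_facts a b ha hab D hb2 hl2
  obtain ⟨_, _, he1, _, _⟩ := w1
  obtain ⟨hk2, _, he2, _, _⟩ := w2
  obtain ⟨_, _, _, hmiss1⟩ := hl1
  have hkj : k < j := by omega
  have h1 : b * y + a * (k - i) < b * D.h (k - 1) := by
    have := hmiss1 (k - 1) (by omega) (by omega)
    have he : k - 1 + 1 - i = k - i := by omega
    rwa [he] at this
  have h2 : b * D.h (k - 1) ≤ b * z := by
    have := hb2.2.1
    rw [if_neg (by omega : ¬ k = 0)] at this
    exact Nat.mul_le_mul_left b this
  have hsplit : a * (j - k) + a * (k - i) = a * (j - i) := by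
    rw [← Nat.mul_add]; congr 1; omega
  omega

/-- max target of left endpoint `x` in `F`. -/
def Jm (F : Finset (ℕ × ℕ)) (x : ℕ) : ℕ := (F.filter (fun p => p.1 = x)).sup Prod.snd

/-- left endpoints of `F` exceeding `u`. -/
def nxtS (F : Finset (ℕ × ℕ)) (u : ℕ) : Finset ℕ :=
  (F.image Prod.fst).filter (fun x => u < x)

/-- The canonical path associated to `F`, built right to left. -/
def gF (a b : ℕ) (F : Finset (ℕ × ℕ)) (u : ℕ) : ℕ :=
  if hs : (nxtS F u).Nonempty then
    if hj : u + 1 < Jm F ((nxtS F u).min' hs) ∧ Jm F ((nxtS F u).min' hs) ≤ b then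
      gF a b F (Jm F ((nxtS F u).min' hs) - 1)
        - a * (Jm F ((nxtS F u).min' hs) - (nxtS F u).min' hs) / b
    else a
  else a
termination_by b - u
decreasing_by
  obtain ⟨hj1, hj2⟩ := hj
  omega

theorem gF_of_empty (a b : ℕ) (F : Finset (ℕ × ℕ)) (u : ℕ)
    (h : ¬(nxtS F u).Nonempty) : gF a b F u = a := by
  rw [gF, dif_neg h]

theorem gF_of_step (a b : ℕ) (F : Finset (ℕ × ℕ)) (u : ℕ)
    (hs : (nxtS F u).Nonempty)
    (hj1 : u + 1 < Jm F ((nxtS F u).min' hs)) (hj2 : Jm F ((nxtS F u).min' hs) ≤ b) :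
    gF a b F u = gF a b F (Jm F ((nxtS F u).min' hs) - 1)
      - a * (Jm F ((nxtS F u).min' hs) - (nxtS F u).min' hs) / b := by
  rw [gF, dif_pos hs, dif_pos ⟨hj1, hj2⟩]

theorem mem_nxtS (F : Finset (ℕ × ℕ)) (u x : ℕ) :
    x ∈ nxtS F u ↔ (∃ p ∈ F, p.1 = x) ∧ u < x := by
  simp [nxtS]

theorem Jm_le (F : Finset (ℕ × ℕ)) {p : ℕ × ℕ} (hp : p ∈ F) : p.2 ≤ Jm F p.1 :=
  Finset.le_sup (by simp [Finset.mem_filter, hp])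

theorem Jm_mem (F : Finset (ℕ × ℕ)) {x : ℕ} (hx : ∃ p ∈ F, p.1 = x) :
    (x, Jm F x) ∈ F := by
  obtain ⟨p, hp, hpx⟩ := hx
  have hnon : (F.filter (fun p => p.1 = x)).Nonempty :=
    ⟨p, by simp [Finset.mem_filter, hp, hpx]⟩
  obtain ⟨q, hq, hqe⟩ := Finset.exists_mem_eq_sup _ hnon Prod.snd
  rw [Finset.mem_filter] at hq
  have : (x, Jm F x) = q := by
    rw [Jm, hqe, ← hq.2]
  rw [this]
  exact hq.1

theorem min'_congr {s t : Finset ℕ} (h : s = t) (hs : s.Nonempty) (ht : t.Nonempty) :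
    s.min' hs = t.min' ht := by subst h; rfl

theorem nxtS_empty_big (b : ℕ) (F : Finset (ℕ × ℕ))
    (hgood : ∀ p ∈ F, p.1 + 2 ≤ p.2 ∧ p.2 ≤ b) {v : ℕ} (hv : b ≤ v + 1) :
    ¬(nxtS F v).Nonempty := by
  rintro ⟨z, hz⟩
  rw [mem_nxtS] at hz
  obtain ⟨⟨p, hp, hpz⟩, hvz⟩ := hz
  have := hgood p hp
  omega

theorem step_data (a b : ℕ) (F : Finset (ℕ × ℕ))
    (hgood : ∀ p ∈ F, p.1 + 2 ≤ p.2 ∧ p.2 ≤ b)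
    {u x j : ℕ} (hs : (nxtS F u).Nonempty)
    (hx : x = (nxtS F u).min' hs) (hj : j = Jm F x) :
    (x, j) ∈ F ∧ u < x ∧ x + 2 ≤ j ∧ j ≤ b ∧
    gF a b F u = gF a b F (j - 1) - a * (j - x) / b ∧
    ∀ p ∈ F, u < p.1 → x ≤ p.1 := by
  have hxm : x ∈ nxtS F u := hx ▸ Finset.min'_mem _ hs
  rw [mem_nxtS] at hxm
  obtain ⟨⟨p, hp, hpx⟩, hux⟩ := hxm
  have hmem : (x, j) ∈ F := hj ▸ Jm_mem F ⟨p, hp, hpx⟩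
  have hg := hgood _ hmem
  simp only at hg
  have hj1 : u + 1 < Jm F ((nxtS F u).min' hs) := by rw [← hx, ← hj]; omega
  have hj2 : Jm F ((nxtS F u).min' hs) ≤ b := by rw [← hx, ← hj]; omega
  have hstep := gF_of_step a b F u hs hj1 hj2
  rw [← hx, ← hj] at hstep
  refine ⟨hmem, hux, hg.1, hg.2, hstep, ?_⟩
  intro q hq huq
  have : q.1 ∈ nxtS F u := by rw [mem_nxtS]; exact ⟨⟨q, hq, rfl⟩, huq⟩
  rw [hx]
  exact Finset.min'_le _ _ this

theorem gF_succ (a b : ℕ) (F : Finset (ℕ × ℕ))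
    (hgood : ∀ p ∈ F, p.1 + 2 ≤ p.2 ∧ p.2 ≤ b)
    {u : ℕ} (hnm : ∀ p ∈ F, p.1 ≠ u + 1) : gF a b F u = gF a b F (u + 1) := by
  have hset : nxtS F u = nxtS F (u + 1) := by
    ext z
    rw [mem_nxtS, mem_nxtS]
    constructor
    · rintro ⟨⟨p, hp, rfl⟩, h⟩
      exact ⟨⟨p, hp, rfl⟩, by have := hnm p hp; omega⟩
    · rintro ⟨hz, h⟩
      exact ⟨hz, by omega⟩
  by_cases hs : (nxtS F u).Nonempty
  · have hs' : (nxtS F (u + 1)).Nonempty := hset ▸ hs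
    have hm : (nxtS F (u + 1)).min' hs' = (nxtS F u).min' hs := min'_congr hset.symm _ _
    obtain ⟨hmem, hux, hxj, hjb, hstep, hmin⟩ := step_data a b F hgood hs rfl rfl
    have hx2 : u + 1 < (nxtS F u).min' hs := by
      have : (nxtS F u).min' hs ∈ nxtS F (u + 1) := hset ▸ Finset.min'_mem _ hs
      rw [mem_nxtS] at this
      omega
    have e2 := gF_of_step a b F (u + 1) hs' (by rw [hm]; omega) (by rw [hm]; omega)
    rw [hm] at e2
    rw [hstep, e2]
  · have hs' : ¬(nxtS F (u + 1)).Nonempty := hset ▸ hs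
    rw [gF_of_empty a b F u hs, gF_of_empty a b F (u + 1) hs']

theorem gF_main (a b : ℕ) (ha : 0 < a) (hab : a < b) (F : Finset (ℕ × ℕ))
    (hgood : ∀ p ∈ F, p.1 + 2 ≤ p.2 ∧ p.2 ≤ b)
    (hr : ∀ i m : ℕ, (i, m) ∈ F → 1 ≤ a * (m - i) % b ∧ a * (m - i) % b < a)
    (hnc : ∀ i m k m' : ℕ, (i, m) ∈ F → (k, m') ∈ F → i < k → k < m → m < m' → False)
    (hkey : ∀ i k m : ℕ, (i, m) ∈ F → (k, m) ∈ F → i < k →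
      a * (m - i) % b < a * (m - k) % b) :
    ∀ n u, b ≤ u + n →
      (u < b → a * (u + 1) ≤ b * gF a b F u) ∧
      gF a b F u ≤ gF a b F (u + 1) ∧
      (∀ i m : ℕ, (i, m) ∈ F → i ≤ u → u + 2 ≤ m →
        b * gF a b F (m - 1) + a * (m - i) % b
          < b * gF a b F u + a * (m - 1 - u)) := by
  intro n
  induction n with
  | zero =>
    intro u hu
    refine ⟨by omega, ?_, ?_⟩
    · rw [gF_of_empty a b F u (nxtS_empty_big b F hgood (by omega)),
        gF_of_empty a b F (u + 1) (nxtS_empty_big b F hgood (by omega))]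
    · intro i m hp h1 h2
      have := hgood (i, m) hp
      simp only at this
      omega
  | succ n IH =>
    intro u hu
    by_cases hub : b ≤ u + n
    · exact IH u hub
    have IH' : ∀ v, u + 1 ≤ v →
        (v < b → a * (v + 1) ≤ b * gF a b F v) ∧
        gF a b F v ≤ gF a b F (v + 1) ∧
        (∀ i m : ℕ, (i, m) ∈ F → i ≤ v → v + 2 ≤ m →
          b * gF a b F (m - 1) + a * (m - i) % b
            < b * gF a b F v + a * (m - 1 - v)) :=
      fun v hv => IH v (by omega)
    have hub' : u < b := by omega
    by_cases hs : (nxtS F u).Nonempty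
    · -- the step case
      obtain ⟨hmem, hux, hxj, hjb, hstep, hmin⟩ := step_data a b F hgood hs rfl rfl
      set x := (nxtS F u).min' hs with hxdef
      set j := Jm F x with hjdef
      have hdm : b * (a * (j - x) / b) + a * (j - x) % b = a * (j - x) :=
        Nat.div_add_mod _ b
      have hrb : 1 ≤ a * (j - x) % b ∧ a * (j - x) % b < a := hr x j hmem
      have hAj : a * j ≤ b * gF a b F (j - 1) := by
        have h0 := (IH' (j - 1) (by omega)).1 (by omega)
        have he : j - 1 + 1 = j := by omega
        rwa [he] at h0
      have hAjx : a * (j - x) ≤ a * j := Nat.mul_le_mul_left a (by omega)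
      have hqle : a * (j - x) / b ≤ gF a b F (j - 1) :=
        Nat.le_of_mul_le_mul_left (by omega) (by omega : 0 < b)
      have h2 : gF a b F u + a * (j - x) / b = gF a b F (j - 1) := by rw [hstep]; omega
      have h4 : b * gF a b F u + a * (j - x)
          = b * gF a b F (j - 1) + a * (j - x) % b := by
        have h3 : b * gF a b F u + b * (a * (j - x) / b) = b * gF a b F (j - 1) := by
          rw [← Nat.mul_add, h2]
        omega
      have hnotleft : ∀ z, u < z → z < x → ∀ p ∈ F, p.1 ≠ z := by
        intro z h1 h2 p hp hpz
        have := hmin p hp (by omega)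
        omega
      refine ⟨?_, ?_, ?_⟩
      · -- above
        intro _
        have h5 : a * (u + 1) ≤ a * x := Nat.mul_le_mul_left a (by omega)
        have h6 : a * x + a * (j - x) = a * j := by
          rw [← Nat.mul_add]; congr 1; omega
        linarith
      · -- monotone step
        by_cases hx1 : x = u + 1
        · have hC := (IH' x (by omega)).2.2 x j hmem (le_refl x) hxj
          have h7 : a * (j - x) = a * (j - 1 - x) + a := by
            rw [show j - x = (j - 1 - x) + 1 by omega, Nat.mul_succ]
          have h8 : b * gF a b F u < b * gF a b F x := by linarith
          have h9 := Nat.lt_of_mul_lt_mul_left h8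
          rw [hx1] at h9
          omega
        · have := gF_succ a b F hgood (u := u)
            (fun p hp => hnotleft (u + 1) (by omega) (by omega) p hp)
          omega
      · -- the master inequality
        intro i m hp hp1 hp2
        by_cases hx1 : x = u + 1
        · have hij : i < x := by omega
          have hxjp : x < m := by omega
          have hjle : j ≤ m := by
            by_contra hh
            exact hnc i m x j hp hmem hij hxjp (by omega)
          by_cases hjj : j = m
          · have hk := hkey i x m hp (hjj ▸ hmem) hij
            have he1 : a * (m - 1 - u) = a * (m - x) := by congr 1; omega
            have he2 : gF a b F (m - 1) = gF a b F (j - 1) := by rw [hjj]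
            have he3 : a * (j - x) = a * (m - x) := by rw [hjj]
            have he4 : a * (j - x) % b = a * (m - x) % b := by rw [hjj]
            rw [he1, he2]
            linarith
          · have hC := (IH' (j - 1) (by omega)).2.2 i m hp (by omega) (by omega)
            have he1 : a * (m - 1 - (j - 1)) = a * (m - j) := by congr 1; omega
            rw [he1] at hC
            have h6 : a * (m - j) + a * (j - x) = a * (m - x) := by
              rw [← Nat.mul_add]; congr 1; omega
            have he2 : a * (m - 1 - u) = a * (m - x) := by congr 1; omega
            rw [he2]
            linarith
        · have hgsucc : gF a b F u = gF a b F (u + 1) :=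
            gF_succ a b F hgood (fun p hp => hnotleft (u + 1) (by omega) (by omega) p hp)
          by_cases hj2 : m = u + 2
          · have he1 : gF a b F (m - 1) = gF a b F (u + 1) := by congr 1; omega
            have he2 : a * (m - 1 - u) = a * 1 := by congr 1; omega
            rw [he1, he2, hgsucc]
            have h9 : a * (m - i) % b < a * 1 := by
              have := (hr i m hp).2
              omega
            exact Nat.add_lt_add_left h9 _
          · have hC := (IH' (u + 1) (le_refl _)).2.2 i m hp (by omega) (by omega)
            have h7 : a * (m - 1 - u) = a * (m - 1 - (u + 1)) + a := by
              rw [show m - 1 - u = (m - 1 - (u + 1)) + 1 by omega, Nat.mul_succ]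
            rw [hgsucc]
            linarith
    · -- no further left endpoints: the path is flat at height a
      have hempv : ∀ v, u ≤ v → ¬(nxtS F v).Nonempty := by
        rintro v hv ⟨z, hz⟩
        rw [mem_nxtS] at hz
        exact hs ⟨z, by rw [mem_nxtS]; exact ⟨hz.1, by omega⟩⟩
      have hgv : ∀ v, u ≤ v → gF a b F v = a := fun v hv =>
        gF_of_empty a b F v (hempv v hv)
      refine ⟨?_, ?_, ?_⟩
      · intro _
        rw [hgv u (le_refl u)]
        calc a * (u + 1) ≤ a * b := Nat.mul_le_mul_left a (by omega)
        _ = b * a := Nat.mul_comm a b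
      · rw [hgv u (le_refl u), hgv (u + 1) (by omega)]
      · intro i m hp hp1 hp2
        have hgb := hgood (i, m) hp
        simp only at hgb
        rw [hgv u (le_refl u), hgv (m - 1) (by omega)]
        have h9 : a * (m - i) % b < a * (m - 1 - u) := by
          have h1 : a * 1 ≤ a * (m - 1 - u) := Nat.mul_le_mul_left a (by omega)
          have h2 := (hr i m hp).2
          omega
        exact Nat.add_lt_add_left h9 _

section Assembly

variable (a b : ℕ) (F : Finset (ℕ × ℕ))

/-- rewraps of the main induction -/
theorem gF_A (ha : 0 < a) (hab : a < b)
    (hgood : ∀ p ∈ F, p.1 + 2 ≤ p.2 ∧ p.2 ≤ b)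
    (hr : ∀ i m : ℕ, (i, m) ∈ F → 1 ≤ a * (m - i) % b ∧ a * (m - i) % b < a)
    (hnc : ∀ i m k m' : ℕ, (i, m) ∈ F → (k, m') ∈ F → i < k → k < m → m < m' → False)
    (hkey : ∀ i k m : ℕ, (i, m) ∈ F → (k, m) ∈ F → i < k →
      a * (m - i) % b < a * (m - k) % b) :
    (∀ v, v < b → a * (v + 1) ≤ b * gF a b F v) ∧
    Monotone (gF a b F) ∧
    (∀ u i m : ℕ, (i, m) ∈ F → i ≤ u → u + 2 ≤ m →
      b * gF a b F (m - 1) + a * (m - i) % b < b * gF a b F u + a * (m - 1 - u)) := by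
  have hM := gF_main a b ha hab F hgood hr hnc hkey
  exact ⟨fun v hv => (hM b v (by omega)).1 hv,
    monotone_nat_of_le_succ (fun u => (hM b u (by omega)).2.1),
    fun u i m h1 h2 h3 => (hM b u (by omega)).2.2 i m h1 h2 h3⟩

theorem gF_ybridge (ha : 0 < a) (hab : a < b)
    (hgood : ∀ p ∈ F, p.1 + 2 ≤ p.2 ∧ p.2 ≤ b)
    (hA : ∀ v, v < b → a * (v + 1) ≤ b * gF a b F v)
    {i j : ℕ} (hmem : (i, j) ∈ F) :
    b * (gF a b F (j - 1) - a * (j - i) / b) + a * (j - i)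
      = b * gF a b F (j - 1) + a * (j - i) % b ∧
    a * (j - i) / b ≤ gF a b F (j - 1) := by
  have hg := hgood (i, j) hmem
  simp only at hg
  have hAj : a * j ≤ b * gF a b F (j - 1) := by
    have h0 := hA (j - 1) (by omega)
    have he : j - 1 + 1 = j := by omega
    rwa [he] at h0
  have hAjx : a * (j - i) ≤ a * j := Nat.mul_le_mul_left a (by omega)
  have hdm : b * (a * (j - i) / b) + a * (j - i) % b = a * (j - i) :=
    Nat.div_add_mod _ b
  have hqle : a * (j - i) / b ≤ gF a b F (j - 1) :=
    Nat.le_of_mul_le_mul_left (by omega) (by omega : 0 < b)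
  have h2 : (gF a b F (j - 1) - a * (j - i) / b) + a * (j - i) / b
      = gF a b F (j - 1) := by omega
  have h3 : b * (gF a b F (j - 1) - a * (j - i) / b) + b * (a * (j - i) / b)
      = b * gF a b F (j - 1) := by rw [← Nat.mul_add, h2]
  exact ⟨by linarith, hqle⟩

theorem gF_step_at (hgood : ∀ p ∈ F, p.1 + 2 ≤ p.2 ∧ p.2 ≤ b)
    {i : ℕ} (hi0 : 0 < i) (hex : ∃ p ∈ F, p.1 = i) :
    gF a b F (i - 1) = gF a b F (Jm F i - 1) - a * (Jm F i - i) / b := by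
  have hmm : i ∈ nxtS F (i - 1) := by rw [mem_nxtS]; exact ⟨hex, by omega⟩
  have hs : (nxtS F (i - 1)).Nonempty := ⟨i, hmm⟩
  have hminx : (nxtS F (i - 1)).min' hs = i := by
    refine le_antisymm (Finset.min'_le _ _ hmm) ?_
    have h := Finset.min'_mem _ hs
    rw [mem_nxtS] at h
    omega
  obtain ⟨_, _, _, _, hstep, _⟩ := step_data a b F hgood hs hminx.symm rfl
  exact hstep

/-- the bottom of the run at a positive left endpoint, as an equation. -/
theorem gF_bridge (ha : 0 < a) (hab : a < b)
    (hgood : ∀ p ∈ F, p.1 + 2 ≤ p.2 ∧ p.2 ≤ b)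
    (hA : ∀ v, v < b → a * (v + 1) ≤ b * gF a b F v)
    {i : ℕ} (hi0 : 0 < i) (hex : ∃ p ∈ F, p.1 = i) :
    b * gF a b F (i - 1) + a * (Jm F i - i)
      = b * gF a b F (Jm F i - 1) + a * (Jm F i - i) % b := by
  have hmem : (i, Jm F i) ∈ F := Jm_mem F hex
  have := (gF_ybridge a b F ha hab hgood hA hmem).1
  rwa [← gF_step_at a b F hgood hi0 hex] at this

/-- there is a rise of the constructed path exactly at the positive left endpoints -/
theorem gF_run_lt (ha : 0 < a) (hab : a < b)
    (hgood : ∀ p ∈ F, p.1 + 2 ≤ p.2 ∧ p.2 ≤ b)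
    (hr : ∀ i m : ℕ, (i, m) ∈ F → 1 ≤ a * (m - i) % b ∧ a * (m - i) % b < a)
    (hA : ∀ v, v < b → a * (v + 1) ≤ b * gF a b F v)
    (hC : ∀ u i m : ℕ, (i, m) ∈ F → i ≤ u → u + 2 ≤ m →
      b * gF a b F (m - 1) + a * (m - i) % b < b * gF a b F u + a * (m - 1 - u))
    {i : ℕ} (hi0 : 0 < i) (hex : ∃ p ∈ F, p.1 = i) :
    gF a b F (i - 1) < gF a b F i := by
  have hmem : (i, Jm F i) ∈ F := Jm_mem F hex
  have hg := hgood (i, Jm F i) hmem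
  simp only at hg
  have hbr := gF_bridge a b F ha hab hgood hA hi0 hex
  have hCi := hC i i (Jm F i) hmem (le_refl i) (by omega)
  have h7 : a * (Jm F i - i) = a * (Jm F i - 1 - i) + a := by
    rw [show Jm F i - i = (Jm F i - 1 - i) + 1 by omega, Nat.mul_succ]
  have h8 : b * gF a b F (i - 1) < b * gF a b F i := by linarith
  exact Nat.lt_of_mul_lt_mul_left h8

theorem gF_laser (ha : 0 < a) (hab : a < b)
    (hgood : ∀ p ∈ F, p.1 + 2 ≤ p.2 ∧ p.2 ≤ b)
    (hr : ∀ i m : ℕ, (i, m) ∈ F → 1 ≤ a * (m - i) % b ∧ a * (m - i) % b < a)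
    (hA : ∀ v, v < b → a * (v + 1) ≤ b * gF a b F v)
    (hC : ∀ u i m : ℕ, (i, m) ∈ F → i ≤ u → u + 2 ≤ m →
      b * gF a b F (m - 1) + a * (m - i) % b < b * gF a b F u + a * (m - 1 - u))
    {i j y : ℕ} (hmem : (i, j) ∈ F) (hy : y = gF a b F (j - 1) - a * (j - i) / b) :
    (b * gF a b F (j - 1) < b * y + a * (j - i)) ∧
    (∀ u, i ≤ u → u + 1 < j → b * y + a * (u + 1 - i) < b * gF a b F u) ∧
    y < gF a b F i ∧ 0 < y := by
  have hg := hgood (i, j) hmem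
  simp only at hg
  have hrr := hr i j hmem
  obtain ⟨hbr, hqle⟩ := gF_ybridge a b F ha hab hgood hA hmem
  rw [← hy] at hbr
  refine ⟨by omega, ?_, ?_, ?_⟩
  · intro u hu1 hu2
    have hCu := hC u i j hmem hu1 (by omega)
    have hid : a * (j - 1 - u) + a * (u + 1 - i) = a * (j - i) := by
      rw [← Nat.mul_add]; congr 1; omega
    linarith
  · have hCi := hC i i j hmem (le_refl i) (by omega)
    have h7 : a * (j - i) = a * (j - 1 - i) + a := by
      rw [show j - i = (j - 1 - i) + 1 by omega, Nat.mul_succ]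
    have h8 : b * y < b * gF a b F i := by linarith
    exact Nat.lt_of_mul_lt_mul_left h8
  · -- 0 < y
    have hAj : a * j ≤ b * gF a b F (j - 1) := by
      have h0 := hA (j - 1) (by omega)
      have he : j - 1 + 1 = j := by omega
      rwa [he] at h0
    have hAjx : a * (j - i) ≤ a * j := Nat.mul_le_mul_left a (by omega)
    rcases Nat.eq_zero_or_pos y with h0 | h0
    · rw [h0, Nat.mul_zero] at hbr
      omega
    · exact h0

/-- the lower bound: the laser start is at or above the bottom of the run -/
theorem gF_ylower (ha : 0 < a) (hab : a < b)
    (hgood : ∀ p ∈ F, p.1 + 2 ≤ p.2 ∧ p.2 ≤ b)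
    (hr : ∀ i m : ℕ, (i, m) ∈ F → 1 ≤ a * (m - i) % b ∧ a * (m - i) % b < a)
    (hA : ∀ v, v < b → a * (v + 1) ≤ b * gF a b F v)
    (hC : ∀ u i m : ℕ, (i, m) ∈ F → i ≤ u → u + 2 ≤ m →
      b * gF a b F (m - 1) + a * (m - i) % b < b * gF a b F u + a * (m - 1 - u))
    {i j y : ℕ} (hmem : (i, j) ∈ F) (hi0 : 0 < i)
    (hy : y = gF a b F (j - 1) - a * (j - i) / b) :
    gF a b F (i - 1) ≤ y := by
  have hg := hgood (i, j) hmem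
  simp only at hg
  have hex : ∃ p ∈ F, p.1 = i := ⟨(i, j), hmem, rfl⟩
  have hmem0 : (i, Jm F i) ∈ F := Jm_mem F hex
  have hg0 := hgood (i, Jm F i) hmem0
  simp only at hg0
  have hjle : j ≤ Jm F i := Jm_le F hmem
  have hbr0 := gF_bridge a b F ha hab hgood hA hi0 hex
  obtain ⟨hbr, hqle⟩ := gF_ybridge a b F ha hab hgood hA hmem
  rw [← hy] at hbr
  by_cases hjj : j = Jm F i
  · rw [hy, gF_step_at a b F hgood hi0 hex, hjj]
  · have hCj := hC (j - 1) i (Jm F i) hmem0 (by omega) (by omega)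
    have he1 : a * (Jm F i - 1 - (j - 1)) = a * (Jm F i - j) := by congr 1; omega
    rw [he1] at hCj
    have hid : a * (Jm F i - j) + a * (j - i) = a * (Jm F i - i) := by
      rw [← Nat.mul_add]; congr 1; omega
    have hrr := hr i j hmem
    have h8 : b * gF a b F (i - 1) ≤ b * y := by linarith
    exact Nat.le_of_mul_le_mul_left h8 (by omega)

end Assembly

theorem DyckPath.ext' {a b : ℕ} {D1 D2 : DyckPath a b} (h : D1.h = D2.h) : D1 = D2 := by
  cases D1
  cases D2
  simp only at h
  subst h
  rfl

section Final

variable (a b : ℕ) (F : Finset (ℕ × ℕ))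

theorem gF_runs_iff (ha : 0 < a) (hab : a < b)
    (hgood : ∀ p ∈ F, p.1 + 2 ≤ p.2 ∧ p.2 ≤ b)
    (hr : ∀ i m : ℕ, (i, m) ∈ F → 1 ≤ a * (m - i) % b ∧ a * (m - i) % b < a)
    (hA : ∀ v, v < b → a * (v + 1) ≤ b * gF a b F v)
    (hC : ∀ u i m : ℕ, (i, m) ∈ F → i ≤ u → u + 2 ≤ m →
      b * gF a b F (m - 1) + a * (m - i) % b < b * gF a b F u + a * (m - 1 - u))
    (D : DyckPath a b) (hDh : ∀ u, D.h u = gF a b F u) :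
    ∀ x, VerticalRunAt a b D x ↔ (x = 0 ∨ ∃ j, (x, j) ∈ F) := by
  intro x
  constructor
  · rintro ⟨hxb, hlt⟩
    by_cases hx0 : x = 0
    · exact Or.inl hx0
    right
    by_contra hnj
    push_neg at hnj
    have hnm : ∀ p ∈ F, p.1 ≠ x := by
      intro p hp hpx
      exact hnj p.2 (by rwa [← hpx, Prod.mk.eta])
    have heq := gF_succ a b F hgood (u := x - 1)
      (fun p hp => by rw [show x - 1 + 1 = x by omega]; exact hnm p hp)
    rw [show x - 1 + 1 = x by omega] at heq
    rw [if_neg hx0, hDh, hDh] at hlt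
    omega
  · intro h
    by_cases hx0 : x = 0
    · subst hx0
      refine ⟨by omega, ?_⟩
      rw [if_pos rfl, hDh]
      have h0 := hA 0 (by omega)
      rcases Nat.eq_zero_or_pos (gF a b F 0) with hg | hg
      · rw [hg, Nat.mul_zero] at h0; omega
      · exact hg
    · rcases h with h | ⟨j, hj⟩
      · exact absurd h hx0
      have hex : ∃ p ∈ F, p.1 = x := ⟨(x, j), hj, rfl⟩
      have hg := hgood (x, j) hj
      simp only at hg
      refine ⟨by omega, ?_⟩
      rw [if_neg hx0, hDh, hDh]
      exact gF_run_lt a b F ha hab hgood hr hA hC (by omega) hex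

theorem gF_valley_laser (ha : 0 < a) (hab : a < b)
    (hgood : ∀ p ∈ F, p.1 + 2 ≤ p.2 ∧ p.2 ≤ b)
    (hr : ∀ i m : ℕ, (i, m) ∈ F → 1 ≤ a * (m - i) % b ∧ a * (m - i) % b < a)
    (hA : ∀ v, v < b → a * (v + 1) ≤ b * gF a b F v)
    (hC : ∀ u i m : ℕ, (i, m) ∈ F → i ≤ u → u + 2 ≤ m →
      b * gF a b F (m - 1) + a * (m - i) % b < b * gF a b F u + a * (m - 1 - u))
    (D : DyckPath a b) (hDh : ∀ u, D.h u = gF a b F u) :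
    ∀ i j₀, 0 < i → (i, j₀) ∈ F → (∀ j, (i, j) ∈ F → j ≤ j₀) →
      IsValley a b D i ∧ IsLaserDiag a b D i (D.h (i - 1)) j₀ := by
  intro i j0 hi0 hmem hmax
  have hex : ∃ p ∈ F, p.1 = i := ⟨(i, j0), hmem, rfl⟩
  have hjm : j0 = Jm F i := le_antisymm (Jm_le F hmem) (hmax _ (Jm_mem F hex))
  have hg := hgood (i, j0) hmem
  simp only at hg
  have hyeq : D.h (i - 1) = gF a b F (j0 - 1) - a * (j0 - i) / b := by
    rw [hDh, gF_step_at a b F hgood hi0 hex, ← hjm]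
  obtain ⟨hhit, hmiss, _, _⟩ :=
    gF_laser a b F ha hab hgood hr hA hC hmem rfl
  refine ⟨⟨by omega, by omega, ?_⟩, by omega, by omega, ?_, ?_⟩
  · rw [hDh, hDh]
    exact gF_run_lt a b F ha hab hgood hr hA hC (by omega) hex
  · rw [hyeq]
    simp only [hDh]
    exact hhit
  · intro u h1 h2
    rw [hyeq]
    simp only [hDh]
    exact hmiss u h1 h2

theorem gF_subset_FD (ha : 0 < a) (hab : a < b)
    (hgood : ∀ p ∈ F, p.1 + 2 ≤ p.2 ∧ p.2 ≤ b)
    (hr : ∀ i m : ℕ, (i, m) ∈ F → 1 ≤ a * (m - i) % b ∧ a * (m - i) % b < a)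
    (hA : ∀ v, v < b → a * (v + 1) ≤ b * gF a b F v)
    (hC : ∀ u i m : ℕ, (i, m) ∈ F → i ≤ u → u + 2 ≤ m →
      b * gF a b F (m - 1) + a * (m - i) % b < b * gF a b F u + a * (m - 1 - u))
    (D : DyckPath a b) (hDh : ∀ u, D.h u = gF a b F u) :
    ∀ d ∈ F, d ∈ FD a b D := by
  rintro ⟨i, j⟩ hd
  have hg := hgood (i, j) hd
  simp only at hg
  obtain ⟨hhit, hmiss, hupper, hpos⟩ :=
    gF_laser a b F ha hab hgood hr hA hC hd rfl
  refine ⟨gF a b F (j - 1) - a * (j - i) / b, ⟨by omega, ?_, ?_⟩, ?_, ?_, ?_, ?_, ?_⟩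
  · by_cases hi0 : i = 0
    · rw [if_pos hi0]; omega
    · rw [if_neg hi0, hDh]
      exact gF_ylower a b F ha hab hgood hr hA hC hd (by omega) rfl
  · rw [hDh]; exact hupper
  · intro hcon
    rw [Prod.ext_iff] at hcon
    simp only at hcon
    omega
  · omega
  · omega
  · rw [hDh]; exact hhit
  · intro u h1 h2
    rw [hDh]
    exact hmiss u h1 h2

theorem gF_unique_h (ha : 0 < a) (hab : a < b)
    (hgood : ∀ p ∈ F, p.1 + 2 ≤ p.2 ∧ p.2 ≤ b)
    (hr : ∀ i m : ℕ, (i, m) ∈ F → 1 ≤ a * (m - i) % b ∧ a * (m - i) % b < a)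
    (hA : ∀ v, v < b → a * (v + 1) ≤ b * gF a b F v)
    (hC : ∀ u i m : ℕ, (i, m) ∈ F → i ≤ u → u + 2 ≤ m →
      b * gF a b F (m - 1) + a * (m - i) % b < b * gF a b F u + a * (m - 1 - u))
    (hMo : Monotone (gF a b F))
    (D' : DyckPath a b)
    (c1 : ∀ x, VerticalRunAt a b D' x ↔ (x = 0 ∨ ∃ j, (x, j) ∈ F))
    (c2 : ∀ i j₀, 0 < i → (i, j₀) ∈ F → (∀ j, (i, j) ∈ F → j ≤ j₀) →
      IsValley a b D' i ∧ IsLaserDiag a b D' i (D'.h (i - 1)) j₀) :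
    ∀ u, D'.h u = gF a b F u := by
  suffices H : ∀ n u, b ≤ u + n → D'.h u = gF a b F u by
    intro u; exact H b u (by omega)
  intro n
  induction n with
  | zero =>
    intro u hu
    rw [D'.norm u (by omega),
      gF_of_empty a b F u (nxtS_empty_big b F hgood (by omega))]
  | succ n IH =>
    intro u hu
    by_cases hub : b ≤ u + n
    · exact IH u hub
    have hub' : u < b := by omega
    have IH' : ∀ v, u + 1 ≤ v → D'.h v = gF a b F v := fun v hv => IH v (by omega)
    by_cases hm : ∃ p ∈ F, p.1 = u + 1
    · have hmem0 : (u + 1, Jm F (u + 1)) ∈ F := Jm_mem F hm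
      have hg0 := hgood _ hmem0
      simp only at hg0
      have hmax : ∀ j, (u + 1, j) ∈ F → j ≤ Jm F (u + 1) := fun j hj => Jm_le F hj
      obtain ⟨hval, hlas⟩ := c2 (u + 1) (Jm F (u + 1)) (by omega) hmem0 hmax
      have hit := hlas.2.2.1
      have hmiss := hlas.2.2.2 (Jm F (u + 1) - 2) (by omega) (by omega)
      rw [show u + 1 - 1 = u by omega] at hit hmiss
      rw [show Jm F (u + 1) - 2 + 1 - (u + 1) = Jm F (u + 1) - 1 - (u + 1) by omega]
        at hmiss
      rw [IH' (Jm F (u + 1) - 1) (by omega)] at hit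
      rw [IH' (Jm F (u + 1) - 2) (by omega)] at hmiss
      have hbr := gF_bridge a b F ha hab hgood hA (by omega : 0 < u + 1) hm
      rw [show u + 1 - 1 = u by omega] at hbr
      have hrr := hr (u + 1) (Jm F (u + 1)) hmem0
      have hCj := hC (Jm F (u + 1) - 2) (u + 1) (Jm F (u + 1)) hmem0 (by omega) (by omega)
      have he3 : a * (Jm F (u + 1) - 1 - (Jm F (u + 1) - 2)) = a * 1 := by congr 1; omega
      rw [he3] at hCj
      have hmo' : b * gF a b F (Jm F (u + 1) - 2) ≤ b * gF a b F (Jm F (u + 1) - 1) :=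
        Nat.mul_le_mul_left b (hMo (by omega))
      have hsplit : a * (Jm F (u + 1) - (u + 1))
          = a * (Jm F (u + 1) - 1 - (u + 1)) + a := by
        rw [show Jm F (u + 1) - (u + 1) = (Jm F (u + 1) - 1 - (u + 1)) + 1 by omega,
          Nat.mul_succ]
      have ha1 : a * 1 = a := Nat.mul_one a
      rcases Nat.lt_trichotomy (D'.h u) (gF a b F u) with hlt | heq | hgt
      · have hmul : b * (D'.h u + 1) ≤ b * gF a b F u := Nat.mul_le_mul_left b (by omega)
        rw [Nat.mul_add, Nat.mul_one] at hmul
        exact absurd rfl (by intro _; linarith : ¬ (0 : ℕ) = 0)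
      · exact heq
      · have hmul : b * (gF a b F u + 1) ≤ b * D'.h u := Nat.mul_le_mul_left b (by omega)
        rw [Nat.mul_add, Nat.mul_one] at hmul
        exact absurd rfl (by intro _; linarith : ¬ (0 : ℕ) = 0)
    · have hnr : ¬ VerticalRunAt a b D' (u + 1) := by
        intro hrun
        rcases (c1 (u + 1)).1 hrun with h | ⟨j, hj⟩
        · omega
        · exact hm ⟨(u + 1, j), hj, rfl⟩
      have hle : D'.h (u + 1) ≤ D'.h u := by
        by_contra hcon
        push_neg at hcon
        refine hnr ⟨by omega, ?_⟩
        rw [if_neg (by omega : ¬ u + 1 = 0)]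
        simpa using hcon
      have hge : D'.h u ≤ D'.h (u + 1) := D'.mono (by omega)
      have hnm : ∀ p ∈ F, p.1 ≠ u + 1 := fun p hp hpx => hm ⟨p, hp, hpx⟩
      have hgs := gF_succ a b F hgood hnm
      have h1 : D'.h (u + 1) = gF a b F (u + 1) := IH' (u + 1) (le_refl _)
      omega

end Final

/-- Let `F` be a nonempty face of `Ass(a,b)`.  There is a unique `a,b`-Dyck path `D`
such that (i) the `x`-coordinates of the vertical runs of `D` are exactly `{0} ∪
{ i : (i,j) ∈ F for some j }`, and (ii) for every `i > 0` occurring as a smaller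
endpoint in `F`, the bottom of the vertical run of `D` at `x = i` is a valley whose
laser diagonal is `(i, j₀)` with `j₀` maximal such that `(i, j₀) ∈ F`.  Moreover this
`D` satisfies `F ⊆ F(D)`. -/
theorem exists_unique_valley_path (a b : ℕ) (ha : 0 < a) (hab : a < b)
    (hcop : Nat.Coprime a b) (F : Finset (ℕ × ℕ)) (hF : F ∈ (Ass a b).faces)
    (hne : F.Nonempty) :
    (∃! D : DyckPath a b,
      (∀ x, VerticalRunAt a b D x ↔ (x = 0 ∨ ∃ j, (x, j) ∈ F)) ∧
      (∀ i j₀, 0 < i → (i, j₀) ∈ F → (∀ j, (i, j) ∈ F → j ≤ j₀) →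
        IsValley a b D i ∧ IsLaserDiag a b D i (D.h (i - 1)) j₀)) ∧
    (∀ D : DyckPath a b,
      ((∀ x, VerticalRunAt a b D x ↔ (x = 0 ∨ ∃ j, (x, j) ∈ F)) ∧
       (∀ i j₀, 0 < i → (i, j₀) ∈ F → (∀ j, (i, j) ∈ F → j ≤ j₀) →
        IsValley a b D i ∧ IsLaserDiag a b D i (D.h (i - 1)) j₀)) →
      ∀ d ∈ F, d ∈ FD a b D) := by
  obtain ⟨D₀, hD₀⟩ := hF
  have hw : ∀ p ∈ F, ∃ y, BottomNorth a b D₀ p.1 y ∧ (p.1, y) ≠ (0, 0) ∧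
      IsLaserDiag a b D₀ p.1 y p.2 := hD₀
  have hgood : ∀ p ∈ F, p.1 + 2 ≤ p.2 ∧ p.2 ≤ b := by
    intro p hp
    obtain ⟨y, hb1, hne1, hl1⟩ := hw p hp
    have := witness_facts a b ha hab D₀ hb1 hl1
    exact ⟨this.1, this.2.1⟩
  have hrf : ∀ i m : ℕ, (i, m) ∈ F → 1 ≤ a * (m - i) % b ∧ a * (m - i) % b < a := by
    intro i m hp
    obtain ⟨y, hb1, hne1, hl1⟩ := hw (i, m) hp
    have := witness_facts a b ha hab D₀ hb1 hl1
    exact ⟨this.2.2.2.1, this.2.2.2.2⟩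
  have hnc : ∀ i m k m' : ℕ, (i, m) ∈ F → (k, m') ∈ F → i < k → k < m → m < m' →
      False := by
    intro i m k m' h1 h2 hik hkm hmm
    obtain ⟨y, hb1, _, hl1⟩ := hw (i, m) h1
    obtain ⟨z, hb2, _, hl2⟩ := hw (k, m') h2
    exact laser_noncross a b ha hab D₀ hb1 hl1 hb2 hl2 hik hkm hmm
  have hkey : ∀ i k m : ℕ, (i, m) ∈ F → (k, m) ∈ F → i < k →
      a * (m - i) % b < a * (m - k) % b := by
    intro i k m h1 h2 hik
    obtain ⟨y, hb1, _, hl1⟩ := hw (i, m) h1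
    obtain ⟨z, hb2, _, hl2⟩ := hw (k, m) h2
    exact laser_key a b ha hab D₀ hb1 hl1 hb2 hl2 hik
  obtain ⟨hA, hMo, hC⟩ := gF_A a b F ha hab hgood hrf hnc hkey
  have hnorm : ∀ v, b ≤ v → gF a b F v = a := fun v hv =>
    gF_of_empty a b F v (nxtS_empty_big b F hgood (by omega))
  have hDh : ∀ u, (⟨gF a b F, hMo, hnorm, hA⟩ : DyckPath a b).h u = gF a b F u :=
    fun _ => rfl
  have hP1 := gF_runs_iff a b F ha hab hgood hrf hA hC _ hDh
  have hP2 := gF_valley_laser a b F ha hab hgood hrf hA hC _ hDh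
  have hsub := gF_subset_FD a b F ha hab hgood hrf hA hC _ hDh
  constructor
  · refine ⟨⟨gF a b F, hMo, hnorm, hA⟩, ⟨hP1, hP2⟩, ?_⟩
    intro D' hD'
    exact DyckPath.ext'
      (funext (gF_unique_h a b F ha hab hgood hrf hA hC hMo D' hD'.1 hD'.2))
  · intro D' hD' d hd
    have hh : D'.h = gF a b F :=
      funext (gF_unique_h a b F ha hab hgood hrf hA hC hMo D' hD'.1 hD'.2)
    have hDD : D' = (⟨gF a b F, hMo, hnorm, hA⟩ : DyckPath a b) := DyckPath.ext' hh
    rw [hDD]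
    exact hsub d hd
end

section
/- Let a < b be coprime positive integers, let D be an a,b-Dyck path, and let F ⊆ F(D). Suppose there exists a valley P of D whose laser diagonal d(P) does not belong to F. Then there exists an a,b-Dyck path D' such that F ⊆ F(D') and λ(D') ⊊ λ(D). -/
/-- The `r`-th entry (rows counted from the top, `1 ≤ r ≤ a`) of the partition `λ(D)`
cut out to the northwest of `D` inside the `a × b` rectangle. -/
def lam (a b : ℕ) (D : DyckPath a b) (r : ℕ) : ℕ :=
  ((Finset.range b).filter fun u => D.h u ≤ a - r).card

namespace DyckPath

variable {a b : ℕ} (D : DyckPath a b)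

theorem h_le_s4 (u : ℕ) : D.h u ≤ a :=
  (D.mono (le_max_left u b)).trans (D.norm _ (le_max_right u b)).le

variable {D}

theorem pos_of_h_pred_lt {r : ℕ} (hr : D.h (r - 1) < D.h r) : 0 < r :=
  Nat.pos_of_ne_zero fun h => by simp [h] at hr

theorem le_of_h_pred_lt {r : ℕ} (hr : D.h (r - 1) < D.h r) : r ≤ b := by
  by_contra! hbr
  have := D.norm (r - 1) (by omega)
  have := D.norm r hbr.le
  omega

variable (D)

def raise (l r : ℕ) (hr : D.h (r - 1) < D.h r) : DyckPath a b where
  h u := if l ≤ u ∧ u < r then D.h u + 1 else D.h u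
  mono := by
    refine monotone_nat_of_le_succ fun u => ?_
    have := D.mono (Nat.le_add_right u 1)
    split_ifs with hu hu'
    · omega
    · obtain rfl : r = u + 1 := by omega
      simpa using hr
    · omega
    · omega
  norm u hu := by
    rw [if_neg (by have := le_of_h_pred_lt hr; omega), D.norm u hu]
  above u hu := (D.above u hu).trans (Nat.mul_le_mul_left b (by split_ifs <;> omega))

variable {D} {l r : ℕ} {hr : D.h (r - 1) < D.h r} {u : ℕ}

theorem raise_h_of_mem (hl : l ≤ u) (hu : u < r) : (D.raise l r hr).h u = D.h u + 1 :=
  if_pos ⟨hl, hu⟩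

theorem raise_h_of_not_mem (h : ¬(l ≤ u ∧ u < r)) : (D.raise l r hr).h u = D.h u :=
  if_neg h

theorem h_le_raise_h : D.h u ≤ (D.raise l r hr).h u := by
  dsimp only [raise]; split_ifs <;> omega

theorem raise_h_le : (D.raise l r hr).h u ≤ D.h u + 1 := by
  dsimp only [raise]; split_ifs <;> omega

end DyckPath

section Partition

variable {a b : ℕ} {D D' : DyckPath a b}

theorem lam_le_lam (hle : ∀ u, D.h u ≤ D'.h u) (r : ℕ) : lam a b D' r ≤ lam a b D r :=
  Finset.card_le_card (Finset.monotone_filter_right _ fun u _ hu => (hle u).trans hu)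

theorem lam_lt_lam (hle : ∀ u, D.h u ≤ D'.h u) {u₀ : ℕ} (hu₀ : u₀ < b)
    (hlt : D.h u₀ < D'.h u₀) : lam a b D' (a - D.h u₀) < lam a b D (a - D.h u₀) := by
  have hsub := Finset.monotone_filter_right (Finset.range b)
    (p := fun u => D'.h u ≤ a - (a - D.h u₀)) fun u _ hu => (hle u).trans hu
  refine Finset.card_lt_card ((Finset.ssubset_iff_of_subset hsub).2 ⟨u₀, ?_, ?_⟩)
  all_goals
    have := D.h_le_s4 u₀
    simp only [Finset.mem_filter, Finset.mem_range]
    omega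

end Partition

section Laser

variable {a b : ℕ} {D D' : DyckPath a b} {x y k : ℕ}

theorem IsLaserDiag.unique {k' : ℕ} (h : IsLaserDiag a b D x y k)
    (h' : IsLaserDiag a b D x y k') : k = k' := by
  obtain ⟨hxk, -, hhit, hbelow⟩ := h
  obtain ⟨hxk', -, hhit', hbelow'⟩ := h'
  by_contra hne
  rcases Nat.lt_or_gt_of_ne hne with hlt | hlt
  · have := hbelow' (k - 1) (by omega) (by omega)
    rw [Nat.sub_add_cancel (by omega)] at this
    omega
  · have := hbelow (k' - 1) (by omega) (by omega)
    rw [Nat.sub_add_cancel (by omega)] at this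
    omega

/-- Lasers are parallel, so a laser fired from a point of `D` above another laser hits `D`
no later than that one. -/
theorem IsLaserDiag.le_of_lt_of_lt {x₁ y₁ k₁ : ℕ} (h : IsLaserDiag a b D x y k)
    (h₁ : IsLaserDiag a b D x₁ y₁ k₁) (hy₁ : D.h (x₁ - 1) ≤ y₁) (hx : x < x₁) (hxk : x₁ < k) :
    k₁ ≤ k := by
  obtain ⟨-, -, hhit, hbelow⟩ := h
  by_contra! hk
  have h₀ := hbelow (x₁ - 1) (by omega) (by omega)
  have h₁ := h₁.2.2.2 (k - 1) (by omega) (by omega)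
  rw [Nat.sub_add_cancel (by omega)] at h₀ h₁
  have hsplit : a * (k - x) = a * (x₁ - x) + a * (k - x₁) := by
    rw [← Nat.mul_add]; congr 1; omega
  nlinarith

theorem IsLaserDiag.of_h_le (h : IsLaserDiag a b D x y k) (hle : ∀ u, D.h u ≤ D'.h u)
    (hk : D'.h (k - 1) = D.h (k - 1)) : IsLaserDiag a b D' x y k := by
  obtain ⟨hxk, hkb, hhit, hbelow⟩ := h
  refine ⟨hxk, hkb, hk ▸ hhit, fun u hxu huk => ?_⟩
  have := Nat.mul_le_mul_left b (hle u)
  have := hbelow u hxu huk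
  omega

theorem IsLaserDiag.succ_of_h_eq_succ (h : IsLaserDiag a b D x y k)
    (hin : ∀ u, x ≤ u → u + 1 < k → D'.h u = D.h u + 1) (hk : D'.h (k - 1) ≤ D.h (k - 1) + 1) :
    IsLaserDiag a b D' x (y + 1) k := by
  obtain ⟨hxk, hkb, hhit, hbelow⟩ := h
  refine ⟨hxk, hkb, ?_, fun u hxu huk => ?_⟩
  · have := Nat.mul_le_mul_left b hk
    rw [Nat.mul_succ] at this ⊢
    omega
  · have := hbelow u hxu huk
    rw [hin u hxu huk, Nat.mul_succ, Nat.mul_succ]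
    omega

end Laser

namespace DyckPath

variable {a b : ℕ} {D : DyckPath a b} {l r : ℕ} {hr : D.h (r - 1) < D.h r} {x y : ℕ}

theorem bottomNorth_raise (h : BottomNorth a b D x y)
    (hvalley : l < x → x ≤ r → D.h (x - 1) < y) : BottomNorth a b (D.raise l r hr) x y := by
  obtain ⟨hxb, hlow, hup⟩ := h
  refine ⟨hxb, ?_, hup.trans_le h_le_raise_h⟩
  split_ifs at hlow ⊢ with hx
  · exact hlow
  · by_cases hmem : l ≤ x - 1 ∧ x - 1 < r
    · rw [raise_h_of_mem hmem.1 hmem.2]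
      exact hvalley (by omega) (by omega)
    · rwa [raise_h_of_not_mem hmem]

theorem bottomNorth_raise_succ (h : BottomNorth a b D x y) (hl : l ≤ x) (hx : x < r) :
    BottomNorth a b (D.raise l r hr) x (y + 1) := by
  obtain ⟨hxb, hlow, hup⟩ := h
  refine ⟨hxb, ?_, by rw [raise_h_of_mem hl hx]; omega⟩
  split_ifs at hlow ⊢
  · omega
  · exact raise_h_le.trans (by omega)

variable (D)

open Classical in
/-- The left end of the block raised to remove the valley at `r`; it is `0` when no `c < r`
qualifies. -/
noncomputable def blockStart (r : ℕ) : ℕ :=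
  Nat.findGreatest (fun c => ∃ k, r + 1 < k ∧ IsLaserDiag a b D c (D.h (c - 1)) k) (r - 1)

variable {D}

theorem blockStart_lt (hr : 0 < r) : D.blockStart r < r := by
  classical
  exact (Nat.findGreatest_le _).trans_lt (by omega)

theorem le_blockStart {c k : ℕ} (hc : c < r) (hk : r + 1 < k)
    (h : IsLaserDiag a b D c (D.h (c - 1)) k) : c ≤ D.blockStart r := by
  classical
  exact Nat.le_findGreatest (by omega) ⟨k, hk, h⟩

theorem exists_isLaserDiag_blockStart (h : D.blockStart r ≠ 0) :
    ∃ k, r + 1 < k ∧ IsLaserDiag a b D (D.blockStart r) (D.h (D.blockStart r - 1)) k := by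
  classical
  exact (Nat.findGreatest_eq_iff.mp rfl).2.1 h

/-- A laser fired left of the block cannot land inside it: it would have to cross the laser
fired from `blockStart`, which reaches beyond `r + 1`. -/
theorem _root_.IsLaserDiag.le_blockStart {x y k : ℕ} (h : IsLaserDiag a b D x y k)
    (hx : x < D.blockStart r) (hk : k ≤ r) : k ≤ D.blockStart r := by
  by_contra! hlt
  obtain ⟨k', hk', h'⟩ := exists_isLaserDiag_blockStart (r := r) (D := D) (by omega)
  have := h.le_of_lt_of_lt h' le_rfl hx hlt
  omega

theorem FD_diff_subset_FD_raise {k : ℕ} (hr : D.h (r - 1) < D.h r)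
    (hlas : IsLaserDiag a b D r (D.h (r - 1)) k) :
    FD a b D \ {(r, k)} ⊆ FD a b (D.raise (D.blockStart r) r hr) := by
  rintro ⟨x, k'⟩ ⟨⟨y, hbn, hne, hld⟩, hxk⟩
  dsimp only at hbn hne hld
  rw [Set.mem_singleton_iff] at hxk
  have hlr := blockStart_lt (D := D) (pos_of_h_pred_lt hr)
  by_cases hcarried : D.blockStart r ≤ x ∧ x < r ∧ k' ≤ r + 1
  · refine ⟨y + 1, bottomNorth_raise_succ hbn hcarried.1 hcarried.2.1, by simp, ?_⟩
    exact hld.succ_of_h_eq_succ (fun u hxu huk => raise_h_of_mem (by omega) (by omega))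
      raise_h_le
  · refine ⟨y, bottomNorth_raise hbn fun hlx hxr => ?_, hne, hld.of_h_le (fun _ => h_le_raise_h)
      (raise_h_of_not_mem fun ⟨hlk, hkr⟩ => ?_)⟩
    · by_contra! hy
      obtain rfl : y = D.h (x - 1) :=
        le_antisymm hy (by simpa [show x ≠ 0 by omega] using hbn.2.1)
      rcases hxr.lt_or_eq with hxr | rfl
      · have := le_blockStart hxr (by omega) hld
        omega
      · exact hxk (by rw [hld.unique hlas])
    · have hxk' := hld.1
      have := hld.le_blockStart (r := r) (by omega) (by omega)
      omega

end DyckPath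

theorem exists_smaller_dyck_path_general (a b : ℕ)
    (D : DyckPath a b) (F : Set (ℕ × ℕ)) (hF : F ⊆ FD a b D)
    (x k : ℕ) (hval : IsValley a b D x)
    (hlas : IsLaserDiag a b D x (D.h (x - 1)) k) (hnot : (x, k) ∉ F) :
    ∃ D' : DyckPath a b, F ⊆ FD a b D' ∧
      (∀ r, lam a b D' r ≤ lam a b D r) ∧ (∃ r, lam a b D' r < lam a b D r) := by
  obtain ⟨hx, hxb, hvalley⟩ := hval
  have hstart := DyckPath.blockStart_lt (D := D) hx
  have hle : ∀ u, D.h u ≤ (D.raise (D.blockStart x) x hvalley).h u := fun _ =>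
    DyckPath.h_le_raise_h
  refine ⟨_, fun d hd => DyckPath.FD_diff_subset_FD_raise hvalley hlas ⟨hF hd, ?_⟩,
    lam_le_lam hle, _, lam_lt_lam hle (u₀ := x - 1) (by omega) ?_⟩
  · rintro rfl
    exact hnot hd
  · rw [DyckPath.raise_h_of_mem (by omega) (by omega)]
    omega

/-- Let `D` be an `a,b`-Dyck path, `F ⊆ F(D)`, and suppose some valley `P` of `D` has
laser diagonal `d(P) ∉ F`.  Then there is an `a,b`-Dyck path `D'` with `F ⊆ F(D')` and
`λ(D') ⊊ λ(D)`. -/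
theorem exists_smaller_dyck_path (a b : ℕ) (ha : 0 < a) (hab : a < b)
    (hcop : Nat.Coprime a b) (D : DyckPath a b) (F : Set (ℕ × ℕ)) (hF : F ⊆ FD a b D)
    (x k : ℕ) (hval : IsValley a b D x)
    (hlas : IsLaserDiag a b D x (D.h (x - 1)) k) (hnot : (x, k) ∉ F) :
    ∃ D' : DyckPath a b, F ⊆ FD a b D' ∧
      (∀ r, lam a b D' r ≤ lam a b D r) ∧ (∃ r, lam a b D' r < lam a b D r) :=
  exists_smaller_dyck_path_general a b D F hF x k hval hlas hnot
end

section
/- Let a < b be coprime positive integers. A face F of Âss(a,b) is a face of Ass(a,b) if and only if no 2-element subset of F is an edge of the obstruction graph OG(a,b). -/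
/-- Two distinct `a,b`-admissible diagonals `d, d'` form an edge of the obstruction graph
`OG(a,b)` exactly when `{d, d'}` is a face of `Âss(a,b)` but not of `Ass(a,b)`. -/
def OGEdge (a b : ℕ) (d d' : ℕ × ℕ) : Prop :=
  d ≠ d' ∧ ({d, d'} : Finset (ℕ × ℕ)) ∈ (hatAss a b).faces ∧
    ({d, d'} : Finset (ℕ × ℕ)) ∉ (Ass a b).faces

/-!
Every subset of a face of `Ass(a,b)` is a face, which gives one direction. Conversely, if
every pair of diagonals of `F` lies in a common `F(D)`, then of two diagonals of `F` with a
common right end the laser of the longer one runs strictly below that of the shorter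
(`LasersNested`). Together with noncrossing this is enough to build a single Dyck path
carrying all of `F`: put the east step over `[u, u+1]` at depth `W(u+1)` below the top row,
where `W(L)` is the largest total rise of a chain of non-overlapping diagonals of `F` to the
right of `L`. The laser from the left end of `d ∈ F` then starts at depth `rise d + W(d.2)`;
maximality of `W`, nesting and noncrossing keep every step over `d` strictly above it, and it
hits the step ending at `d.2`.
-/

open Finset

variable {a b : ℕ}

/-- For an admissible diagonal `ij` this is the `p ∈ [1, a-1]` with `⌊pb/a⌋ = j - i - 1`:
a laser fired from the left end of `ij` that hits the east step ending at `j` climbs exactly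
`p` units before hitting it. -/
def rise (a b : ℕ) (d : ℕ × ℕ) : ℕ := a * (d.2 - d.1) / b

theorem Admissible.rise_bounds (hab : a ≤ b) (hcop : a.Coprime b) {d : ℕ × ℕ}
    (hd : Admissible a b d) :
    b * rise a b d + a * d.1 < a * d.2 ∧ a * d.2 < b * rise a b d + a * d.1 + a := by
  obtain ⟨q, hq, hqd⟩ := mem_image.mp hd.2.1
  rw [mem_Icc] at hq
  obtain ⟨n, hn⟩ := Nat.exists_eq_add_of_le hd.1.1
  have hlen : d.2 - d.1 = n + 2 := by omega
  rw [show d.2 - d.1 - 1 = n + 1 by omega] at hqd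
  -- `a ∤ qb` by coprimality, so `qb` lies strictly between `a(n+1)` and `a(n+2)`
  have hmod_pos : 0 < q * b % a := by
    refine Nat.pos_of_ne_zero fun h0 => ?_
    have := Nat.le_of_dvd hq.1 (hcop.dvd_of_dvd_mul_right (Nat.dvd_of_mod_eq_zero h0))
    omega
  have hmod_lt := Nat.mod_lt (q * b) (by omega : 0 < a)
  have hdiv := Nat.div_add_mod (q * b) a
  rw [hqd] at hdiv
  have hrise : rise a b d = q := by
    rw [rise, hlen]
    apply Nat.div_eq_of_lt_le <;> nlinarith
  rw [hrise, hn]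
  constructor <;> nlinarith

theorem isLaserDiag_iff (hab : a ≤ b) (hcop : a.Coprime b) (D : DyckPath a b) {d : ℕ × ℕ}
    (hd : Admissible a b d) {y : ℕ} :
    IsLaserDiag a b D d.1 y d.2 ↔ D.h (d.2 - 1) = y + rise a b d ∧
      ∀ u, d.1 ≤ u → u + 1 < d.2 → b * y + a * (u + 1 - d.1) < b * D.h u := by
  obtain ⟨hlow, hhigh⟩ := hd.rise_bounds hab hcop
  obtain ⟨n, hn⟩ := Nat.exists_eq_add_of_le hd.1.1
  have hlen : d.2 - d.1 = n + 2 := by omega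
  constructor
  · rintro ⟨-, -, hhit, hbelow⟩
    refine ⟨le_antisymm ?_ ?_, hbelow⟩
    · rw [hlen] at hhit
      have : b * D.h (d.2 - 1) < b * (y + rise a b d + 1) := by
        rw [hn] at hlow hhigh
        nlinarith
      exact Nat.lt_succ_iff.mp (Nat.lt_of_mul_lt_mul_left this)
    · have hlast := hbelow (d.2 - 2) (by omega) (by omega)
      rw [show d.2 - 2 + 1 - d.1 = n + 1 by omega] at hlast
      have hmono := Nat.mul_le_mul_left b (D.mono (show d.2 - 2 ≤ d.2 - 1 by omega))
      have : b * (y + rise a b d) < b * (D.h (d.2 - 1) + 1) := by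
        rw [hn] at hlow hhigh
        nlinarith
      exact Nat.lt_succ_iff.mp (Nat.lt_of_mul_lt_mul_left this)
  · rintro ⟨hhit, hbelow⟩
    refine ⟨by omega, hd.1.2.1, ?_, hbelow⟩
    rw [hhit, hlen]
    rw [hn] at hlow
    nlinarith

/-- Of two lasers of `D` hitting the same east step, the one fired from further left runs
strictly below the other. -/
theorem rise_lt_of_mem_FD (hab : a ≤ b) (hcop : a.Coprime b) (D : DyckPath a b)
    {d e : ℕ × ℕ} (hd : Admissible a b d) (he : Admissible a b e)
    (hdD : d ∈ FD a b D) (heD : e ∈ FD a b D) (hsnd : d.2 = e.2) (hfst : d.1 < e.1) :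
    b * rise a b e + a * e.1 < b * rise a b d + a * d.1 := by
  obtain ⟨y, -, -, hdL⟩ := hdD
  obtain ⟨y', ⟨-, hy', -⟩, -, heL⟩ := heD
  obtain ⟨hdh, hbelow⟩ := (isLaserDiag_iff hab hcop D hd).mp hdL
  obtain ⟨heh, -⟩ := (isLaserDiag_iff hab hcop D he).mp heL
  rw [if_neg (by omega)] at hy'
  have hpass := hbelow (e.1 - 1) (by omega) (by have := he.1.1; omega)
  rw [show e.1 - 1 + 1 - d.1 = e.1 - d.1 by omega] at hpass
  have hstep := Nat.mul_le_mul_left b hy'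
  have hsplit : a * (e.1 - d.1) + a * d.1 = a * e.1 := by
    rw [← mul_add, Nat.sub_add_cancel hfst.le]
  rw [hsnd] at hdh
  have : b * (y + rise a b d) = b * (y' + rise a b e) := by rw [← hdh, heh]
  nlinarith

def IsChainFrom (L : ℕ) (S : Finset (ℕ × ℕ)) : Prop :=
  (∀ e ∈ S, L ≤ e.1) ∧ (S : Set (ℕ × ℕ)).Pairwise fun e f => e.2 ≤ f.1 ∨ f.2 ≤ e.1

namespace IsChainFrom

variable {L : ℕ} {S T : Finset (ℕ × ℕ)}

theorem subset (hS : IsChainFrom L S) (hTS : T ⊆ S) : IsChainFrom L T :=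
  ⟨fun e he => hS.1 e (hTS he), hS.2.mono (coe_subset.mpr hTS)⟩

theorem mono (hS : IsChainFrom L S) {L' : ℕ} (hL' : L' ≤ L) : IsChainFrom L' S :=
  ⟨fun e he => hL'.trans (hS.1 e he), hS.2⟩

theorem insert {d : ℕ × ℕ} (hS : IsChainFrom d.2 S) (hd : d.1 ≤ d.2) :
    IsChainFrom d.1 (insert d S) := by
  refine ⟨?_, ?_⟩
  · simp only [mem_insert, forall_eq_or_imp, le_refl, true_and]
    exact fun e he => hd.trans (hS.1 e he)
  · rw [coe_insert, Set.pairwise_insert]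
    exact ⟨hS.2, fun e he _ => ⟨Or.inl (hS.1 e he), Or.inr (hS.1 e he)⟩⟩

theorem sum_sub_le (hS : IsChainFrom L S) {J : ℕ} (hJ : ∀ e ∈ S, e.2 ≤ J) :
    ∑ e ∈ S, (e.2 - e.1) ≤ J - L := by
  classical
  have hdisj : (S : Set (ℕ × ℕ)).PairwiseDisjoint fun e => Ico e.1 e.2 := by
    refine hS.2.mono' fun e f hef => disjoint_left.mpr fun x hxe hxf => ?_
    simp only [mem_Ico] at hxe hxf
    omega
  calc ∑ e ∈ S, (e.2 - e.1) = (S.biUnion fun e => Ico e.1 e.2).card := by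
        simp only [card_biUnion hdisj, Nat.card_Ico]
    _ ≤ (Ico L J).card := by
        refine card_le_card fun x hx => ?_
        obtain ⟨e, he, hx⟩ := mem_biUnion.mp hx
        have := hS.1 e he
        have := hJ e he
        simp only [mem_Ico] at hx ⊢
        omega
    _ = J - L := Nat.card_Ico L J

theorem mul_sum_rise_add_card_le (hab : a ≤ b) (hcop : a.Coprime b)
    (hadm : ∀ e ∈ S, Admissible a b e) (hS : IsChainFrom L S) {J : ℕ}
    (hJ : ∀ e ∈ S, e.2 ≤ J) (hLJ : L ≤ J) :
    b * ∑ e ∈ S, rise a b e + #S + a * L ≤ a * J := by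
  have hrise : ∀ e ∈ S, b * rise a b e + 1 ≤ a * (e.2 - e.1) := fun e he => by
    have := ((hadm e he).rise_bounds hab hcop).1
    rw [Nat.mul_sub]
    omega
  calc b * ∑ e ∈ S, rise a b e + #S + a * L = ∑ e ∈ S, (b * rise a b e + 1) + a * L := by
        rw [sum_add_distrib, mul_sum, card_eq_sum_ones]
    _ ≤ a * ∑ e ∈ S, (e.2 - e.1) + a * L := by
        rw [mul_sum]
        gcongr with e he
        exact hrise e he
    _ ≤ a * (J - L) + a * L := by
        gcongr
        exact hS.sum_sub_le hJ
    _ = a * J := by rw [← mul_add, Nat.sub_add_cancel hLJ]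

end IsChainFrom

open Classical in
noncomputable def chainWeight (a b : ℕ) (F : Finset (ℕ × ℕ)) (L : ℕ) : ℕ :=
  (F.powerset.filter (IsChainFrom L)).sup fun S => ∑ e ∈ S, rise a b e

section chainWeight

variable {F : Finset (ℕ × ℕ)}

open Classical in
theorem exists_chainWeight_eq (F : Finset (ℕ × ℕ)) (L : ℕ) :
    ∃ S ⊆ F, IsChainFrom L S ∧ chainWeight a b F L = ∑ e ∈ S, rise a b e := by
  have hempty : IsChainFrom L ∅ := ⟨by simp, by simp⟩
  obtain ⟨S, hS, hmax⟩ := exists_mem_eq_sup _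
    ⟨∅, mem_filter.mpr ⟨empty_mem_powerset F, hempty⟩⟩ fun S => ∑ e ∈ S, rise a b e
  rw [mem_filter, mem_powerset] at hS
  exact ⟨S, hS.1, hS.2, hmax⟩

open Classical in
theorem sum_rise_le_chainWeight {L : ℕ} {S : Finset (ℕ × ℕ)} (hSF : S ⊆ F)
    (hS : IsChainFrom L S) : ∑ e ∈ S, rise a b e ≤ chainWeight a b F L :=
  le_sup (f := fun S => ∑ e ∈ S, rise a b e)
    (mem_filter.mpr ⟨mem_powerset.mpr hSF, hS⟩)

theorem chainWeight_antitone : Antitone (chainWeight a b F) := fun _ _ hL => by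
  obtain ⟨S, hSF, hS, hW⟩ := exists_chainWeight_eq (a := a) (b := b) F _
  exact hW ▸ sum_rise_le_chainWeight hSF (hS.mono hL)

variable (hadm : ∀ e ∈ F, Admissible a b e)
include hadm

theorem chainWeight_eq_zero {L : ℕ} (hL : b ≤ L) : chainWeight a b F L = 0 := by
  obtain ⟨S, hSF, hS, hW⟩ := exists_chainWeight_eq (a := a) (b := b) F L
  have hSe : S = ∅ := eq_empty_of_forall_notMem fun e he => by
    have := (hadm e (hSF he)).1
    have := hS.1 e he
    unfold IsDiagonal at *
    omega
  simp [hW, hSe]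

theorem rise_add_chainWeight_le {d : ℕ × ℕ} (hd : d ∈ F) :
    rise a b d + chainWeight a b F d.2 ≤ chainWeight a b F d.1 := by
  obtain ⟨S, hSF, hS, hW⟩ := exists_chainWeight_eq (a := a) (b := b) F d.2
  have hdd := (hadm d hd).1.1
  have hdS : d ∉ S := fun h => by have := hS.1 d h; omega
  rw [hW, ← sum_insert hdS]
  exact sum_rise_le_chainWeight (insert_subset hd hSF) (hS.insert (by omega))

variable (hab : a ≤ b) (hcop : a.Coprime b)
include hab hcop

variable {L : ℕ}

theorem mul_chainWeight_add_le (hL : L ≤ b) :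
    b * chainWeight a b F L + a * L ≤ a * b := by
  obtain ⟨S, hSF, hS, hW⟩ := exists_chainWeight_eq (a := a) (b := b) F L
  have := hS.mul_sum_rise_add_card_le hab hcop (fun e he => hadm e (hSF he))
    (fun e he => (hadm e (hSF he)).1.2.1) hL
  rw [← hW] at this
  omega

theorem rise_add_chainWeight_lt {d : ℕ × ℕ} (hd : d ∈ F) :
    rise a b d + chainWeight a b F d.2 < a := by
  obtain ⟨S, hSF, hS, hW⟩ := exists_chainWeight_eq (a := a) (b := b) F d.2
  have hdd := (hadm d hd).1
  unfold IsDiagonal at hdd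
  have hdS : d ∉ S := fun h => by have := hS.1 d h; omega
  have hdSF : insert d S ⊆ F := insert_subset hd hSF
  have := (hS.insert (by omega)).mul_sum_rise_add_card_le hab hcop
    (fun e he => hadm e (hdSF he)) (fun e he => (hadm e (hdSF he)).1.2.1) (by omega)
  rw [sum_insert hdS, card_insert_of_notMem hdS, ← hW] at this
  have : b * (rise a b d + chainWeight a b F d.2) < b * a := by nlinarith
  exact Nat.lt_of_mul_lt_mul_left this

theorem chainWeight_le (hL : L ≤ b) : chainWeight a b F L ≤ a := by
  have := mul_chainWeight_add_le hadm hab hcop hL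
  rcases Nat.eq_zero_or_pos b with hb | hb
  · rw [chainWeight_eq_zero hadm (by omega)]
    exact Nat.zero_le a
  · rw [Nat.mul_comm a b] at this
    exact Nat.le_of_mul_le_mul_left (by omega) hb

end chainWeight

def LasersNested (a b : ℕ) (F : Finset (ℕ × ℕ)) : Prop :=
  ∀ d ∈ F, ∀ e ∈ F, d.2 = e.2 → d.1 < e.1 →
    b * rise a b e + a * e.1 < b * rise a b d + a * d.1

section nested

variable {F : Finset (ℕ × ℕ)} (hab : a ≤ b) (hcop : a.Coprime b)
  (hadm : ∀ e ∈ F, Admissible a b e) (hnest : LasersNested a b F)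
include hab hcop hadm hnest

theorem mul_sum_rise_add_lt_of_forall_snd_le {d : ℕ × ℕ} (hd : d ∈ F) {L : ℕ}
    {T : Finset (ℕ × ℕ)} (hTF : T ⊆ F) (hT : IsChainFrom L T) (hdL : d.1 < L) (hLd : L < d.2)
    (hinside : ∀ e ∈ T, e.2 ≤ d.2) :
    b * ∑ e ∈ T, rise a b e + a * L < b * rise a b d + a * d.1 := by
  obtain ⟨-, hhigh⟩ := (hadm d hd).rise_bounds hab hcop
  by_cases hend : ∃ e₀ ∈ T, e₀.2 = d.2
  · obtain ⟨e₀, he₀, he₀d⟩ := hend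
    have hrest : ∀ e ∈ T.erase e₀, e.2 ≤ e₀.1 := fun e he => by
      obtain ⟨hne, heT⟩ := mem_erase.mp he
      have := (hadm e (hTF heT)).1.1
      have := hinside e heT
      rcases hT.2 heT he₀ hne with h | h <;> omega
    have hsum := (hT.subset (erase_subset e₀ T)).mul_sum_rise_add_card_le hab hcop
      (fun e he => hadm e (hTF (mem_of_mem_erase he))) hrest (hT.1 e₀ he₀)
    have hlower := hnest d hd e₀ (hTF he₀) he₀d.symm (by have := hT.1 e₀ he₀; omega)
    rw [← add_sum_erase T _ he₀]
    nlinarith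
  · push Not at hend
    have hsum := hT.mul_sum_rise_add_card_le hab hcop (fun e he => hadm e (hTF he))
      (J := d.2 - 1) (fun e he => by have := hinside e he; have := hend e he; omega) (by omega)
    have hsplit : a * (d.2 - 1) + a = a * d.2 := by
      rw [← Nat.mul_succ, Nat.succ_eq_add_one, Nat.sub_add_cancel (by omega)]
    nlinarith

theorem mul_chainWeight_add_lt (hnc : ∀ d ∈ F, ∀ e ∈ F, ¬Crosses d e) {d : ℕ × ℕ}
    (hd : d ∈ F) {L : ℕ} (hdL : d.1 < L) (hLd : L < d.2) :
    b * chainWeight a b F L + a * L < b * (rise a b d + chainWeight a b F d.2) + a * d.1 := by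
  obtain ⟨S, hSF, hS, hW⟩ := exists_chainWeight_eq (a := a) (b := b) F L
  -- a diagonal of `S` reaching beyond `d` starts after `d` ends, since it cannot cross `d`
  have hbeyond : IsChainFrom d.2 (S.filter fun e => ¬e.2 ≤ d.2) := by
    refine ⟨fun e he => ?_, (hS.subset (filter_subset _ S)).2⟩
    obtain ⟨heS, hed⟩ := mem_filter.mp he
    by_contra hlt
    exact hnc d hd e (hSF heS) (Or.inl ⟨by have := hS.1 e heS; omega, by omega, by omega⟩)
  have hout :=
    sum_rise_le_chainWeight (a := a) (b := b) ((filter_subset _ S).trans hSF) hbeyond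
  have hin := mul_sum_rise_add_lt_of_forall_snd_le hab hcop hadm hnest hd
    ((filter_subset _ S).trans hSF) (hS.subset (filter_subset _ S)) hdL hLd
    (fun e he => (mem_filter.mp he).2)
  rw [hW, ← sum_filter_add_sum_filter_not S fun e => e.2 ≤ d.2]
  nlinarith

end nested

noncomputable def DyckPath.ofChainWeight {F : Finset (ℕ × ℕ)}
    (hadm : ∀ e ∈ F, Admissible a b e) (hab : a ≤ b) (hcop : a.Coprime b) : DyckPath a b where
  h u := a - chainWeight a b F (u + 1)
  mono _ _ h := Nat.sub_le_sub_left (chainWeight_antitone (by omega)) a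
  norm x hx := by rw [chainWeight_eq_zero hadm (by omega), Nat.sub_zero]
  above x hx := by
    have := mul_chainWeight_add_le hadm hab hcop (L := x + 1) hx
    rw [Nat.mul_sub, Nat.mul_comm b a]
    omega

theorem mem_FD_ofChainWeight {F : Finset (ℕ × ℕ)} (hab : a ≤ b) (hcop : a.Coprime b)
    (hadm : ∀ e ∈ F, Admissible a b e) (hnc : ∀ d ∈ F, ∀ e ∈ F, ¬Crosses d e)
    (hnest : LasersNested a b F) {d : ℕ × ℕ} (hd : d ∈ F) :
    d ∈ FD a b (DyckPath.ofChainWeight hadm hab hcop) := by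
  have hlt := rise_add_chainWeight_lt hadm hab hcop hd
  have hjump := rise_add_chainWeight_le hadm hd
  set W := chainWeight a b F
  have hdiag := (hadm d hd).1
  unfold IsDiagonal at hdiag
  have hkey {L : ℕ} (hdL : d.1 < L) (hLd : L < d.2) :
      W L < rise a b d + W d.2 ∧ b * W L + a * L < b * (rise a b d + W d.2) + a * d.1 :=
    have h := mul_chainWeight_add_lt hab hcop hadm hnest hnc hd hdL hLd
    ⟨Nat.lt_of_mul_lt_mul_left (by nlinarith [Nat.mul_le_mul_left a hdL.le]), h⟩
  refine ⟨a - (rise a b d + W d.2), ⟨by omega, ?_, ?_⟩,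
    fun h => by simp only [Prod.mk.injEq] at h; omega,
    (isLaserDiag_iff hab hcop _ (hadm d hd)).mpr ⟨?_, fun u hu1 hu2 => ?_⟩⟩
  · split_ifs with h0
    · exact Nat.zero_le _
    · show a - W (d.1 - 1 + 1) ≤ _
      rw [Nat.sub_add_cancel (by omega)]
      omega
  · show _ < a - W (d.1 + 1)
    have := (hkey (L := d.1 + 1) (by omega) (by omega)).1
    omega
  · show a - W (d.2 - 1 + 1) = _
    rw [Nat.sub_add_cancel (by omega)]
    omega
  · show b * (a - _) + a * (u + 1 - d.1) < b * (a - W (u + 1))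
    have := (hkey (L := u + 1) (by omega) (by omega)).2
    have hWu : W (u + 1) ≤ a := chainWeight_le hadm hab hcop (by omega)
    zify [hlt.le, hWu, (by omega : d.1 ≤ u + 1)] at *
    nlinarith

theorem mem_Ass_iff_no_obstruction_general (a b : ℕ) (hab : a < b)
    (hcop : Nat.Coprime a b) (F : Finset (ℕ × ℕ)) (hF : F ∈ (hatAss a b).faces) :
    F ∈ (Ass a b).faces ↔ ∀ d ∈ F, ∀ d' ∈ F, ¬OGEdge a b d d' := by
  have pair_subset {d d' : ℕ × ℕ} (hd : d ∈ F) (hd' : d' ∈ F) : {d, d'} ⊆ F :=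
    insert_subset hd (singleton_subset_iff.mpr hd')
  constructor
  · rintro hFA d hd d' hd' ⟨-, -, hpair⟩
    exact hpair ((Ass a b).down F hFA _ (pair_subset hd hd'))
  · intro hno
    obtain ⟨hadm, hnc⟩ := hF
    have hnest : LasersNested a b F := fun d hd e he hsnd hfst => by
      have hpair : {d, e} ∈ (Ass a b).faces := by
        by_contra hnot
        exact hno d hd e he
          ⟨by rintro rfl; omega, (hatAss a b).down F ⟨hadm, hnc⟩ _ (pair_subset hd he), hnot⟩
      obtain ⟨D, hD⟩ := hpair
      exact rise_lt_of_mem_FD hab.le hcop D (hadm d hd) (hadm e he) (hD d (by simp))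
        (hD e (by simp)) hsnd hfst
    exact ⟨DyckPath.ofChainWeight hadm hab.le hcop,
      fun d hd => mem_FD_ofChainWeight hab.le hcop hadm hnc hnest hd⟩

/-- A face `F` of `Âss(a,b)` is a face of `Ass(a,b)` if and only if no 2-element subset
of `F` is an edge of the obstruction graph `OG(a,b)`. -/
theorem mem_Ass_iff_no_obstruction (a b : ℕ) (ha : 0 < a) (hab : a < b)
    (hcop : Nat.Coprime a b) (F : Finset (ℕ × ℕ)) (hF : F ∈ (hatAss a b).faces) :
    F ∈ (Ass a b).faces ↔ ∀ d ∈ F, ∀ d' ∈ F, ¬OGEdge a b d d' :=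
  mem_Ass_iff_no_obstruction_general a b hab hcop F hF
end

section
/- Let a < b be coprime positive integers and let ij and im be a,b-admissible diagonals of P_{b+1} with i < j < m (two admissible diagonals sharing their smaller endpoint). Then {ij, im} is a face of Ass(a,b), i.e., there exists an a,b-Dyck path D with {ij, im} ⊆ F(D). -/
/-!
Write `c(n) = ⌈a n / b⌉`, so that `u ↦ c(u + 1)` is the lowest `a,b`-Dyck path. A value
`n ∈ S(a,b)` marks a column strip `(n, n + 1]` in which the line of slope `a/b` through the
origin crosses a horizontal grid line, i.e. `b c(n) < a (n + 1)`. With `y = a - c(m - i - 1)`,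
take the path that follows the lowest path up to column `i`, then runs just above the laser from
`(i, y + 1)` up to column `j - 1`, and then just above the laser from `(i, y)` until it reaches
height `a` in column `m - 1`. The crossing in strip `j - i - 1` makes the first laser hit the
path in column `j`, the crossing in strip `m - i - 1` makes the second one hit the top row in
column `m`, and coprimality keeps both lasers off the lattice points they pass.
-/

namespace Nat

lemma mul_ceilDiv_lt_add {n b : ℕ} (hb : 0 < b) : b * (n ⌈/⌉ b) < n + b := by
  have := Nat.div_mul_le_self (n + b - 1) b
  rw [ceilDiv_eq_add_pred_div, mul_comm]
  omega

lemma mul_ceilDiv_le_mul_ceilDiv (a b : ℕ) {n n' : ℕ} (h : n ≤ n') :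
    a * n ⌈/⌉ b ≤ a * n' ⌈/⌉ b := by
  have := Nat.mul_le_mul_left a h
  simp only [ceilDiv_eq_add_pred_div]
  exact Nat.div_le_div_right (by omega)

lemma Coprime.mul_lt_mul_ceilDiv {a b n : ℕ} (hcop : a.Coprime b) (hn : 0 < n) (hnb : n < b) :
    a * n < b * (a * n ⌈/⌉ b) := by
  refine lt_of_le_of_ne (le_smul_ceilDiv (hn.trans hnb)) fun h => ?_
  have hdvd : b ∣ n := hcop.symm.dvd_of_dvd_mul_left ⟨_, h⟩
  exact (Nat.le_of_dvd hn hdvd).not_gt hnb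

end Nat

lemma mul_ceilDiv_lt_of_mem_Sab {a b n : ℕ} (hb : 0 < b) (hn : n ∈ Sab a b) :
    b * (a * n ⌈/⌉ b) < a * (n + 1) := by
  obtain ⟨s, hs, rfl⟩ := Finset.mem_image.1 hn
  have ha : 0 < a := by
    rw [Finset.mem_Icc] at hs
    omega
  calc b * (a * (s * b / a) ⌈/⌉ b) ≤ b * s := by
        refine Nat.mul_le_mul_left b ((ceilDiv_le_iff_le_mul hb).2 ?_)
        rw [mul_comm a, mul_comm b]
        exact Nat.div_mul_le_self _ _
    _ < a * (s * b / a + 1) := by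
        rw [mul_comm b]
        exact Nat.lt_mul_div_succ _ ha

lemma mul_le_mul_add_ceilDiv {a b i n y : ℕ} (hb : 0 < b) (hiy : a * i ≤ b * y)
    (hin : i ≤ n) :
    a * n ≤ b * (y + a * (n - i) ⌈/⌉ b) := by
  have hc : a * (n - i) ≤ b * (a * (n - i) ⌈/⌉ b) := le_smul_ceilDiv hb
  calc a * n = a * i + a * (n - i) := by rw [← mul_add, Nat.add_sub_cancel' hin]
    _ ≤ b * y + b * (a * (n - i) ⌈/⌉ b) := Nat.add_le_add hiy hc
    _ = b * (y + a * (n - i) ⌈/⌉ b) := (mul_add _ _ _).symm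

lemma monotone_ite_lt {α β : Type*} [LinearOrder α] [Preorder β] {f g : α → β} {k : α}
    (hf : Monotone f) (hg : Monotone g) (hfg : ∀ u < k, f u ≤ g k) :
    Monotone fun u => if u < k then f u else g u := by
  intro u v huv
  dsimp only
  split_ifs with hu hv hv
  · exact hf huv
  · exact (hfg u hu).trans (hg (not_lt.1 hv))
  · exact absurd (huv.trans_lt hv) hu
  · exact hg huv

/-- Coprimality keeps the laser off every lattice point strictly between its ends, so lying
weakly above the rounded-up laser puts the path strictly above the laser. -/
lemma isLaserDiag_of_ceilDiv_le {a b : ℕ} (D : DyckPath a b) {x y k : ℕ} (hcop : a.Coprime b)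
    (hxk : x < k) (hkb : k ≤ b) (hhit : b * D.h (k - 1) < b * y + a * (k - x))
    (habove : ∀ u, x ≤ u → u + 1 < k → y + a * (u + 1 - x) ⌈/⌉ b ≤ D.h u) :
    IsLaserDiag a b D x y k := by
  refine ⟨hxk, hkb, hhit, fun u hxu huk => ?_⟩
  calc b * y + a * (u + 1 - x) < b * y + b * (a * (u + 1 - x) ⌈/⌉ b) :=
        Nat.add_lt_add_left (hcop.mul_lt_mul_ceilDiv (by omega) (by omega)) _
    _ = b * (y + a * (u + 1 - x) ⌈/⌉ b) := (mul_add _ _ _).symm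
    _ ≤ b * D.h u := Nat.mul_le_mul_left b (habove u hxu huk)

def pairPath (a b i j m y : ℕ) (u : ℕ) : ℕ :=
  if u < i then a * (u + 1) ⌈/⌉ b
  else if u < j - 1 then y + 1 + a * (u + 1 - i) ⌈/⌉ b
  else if u < m - 1 then y + a * (u + 1 - i) ⌈/⌉ b
  else a

section pairPath

variable {a b i j m y u : ℕ}

lemma pairPath_of_lt (hu : u < i) : pairPath a b i j m y u = a * (u + 1) ⌈/⌉ b := if_pos hu

lemma pairPath_of_lt_pred (hiu : i ≤ u) (hu : u < j - 1) :
    pairPath a b i j m y u = y + 1 + a * (u + 1 - i) ⌈/⌉ b := by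
  rw [pairPath, if_neg hiu.not_gt, if_pos hu]

lemma pairPath_of_le_of_lt (hij : i < j) (hju : j - 1 ≤ u) (hu : u < m - 1) :
    pairPath a b i j m y u = y + a * (u + 1 - i) ⌈/⌉ b := by
  rw [pairPath, if_neg (by omega), if_neg (by omega), if_pos hu]

lemma pairPath_of_le (hij : i < j) (hjm : j ≤ m) (hmu : m - 1 ≤ u) :
    pairPath a b i j m y u = a := by
  rw [pairPath, if_neg (by omega), if_neg (by omega), if_neg (by omega)]

lemma pairPath_monotone (hb : 0 < b) (hij : i + 2 ≤ j) (hjm : j < m) (hiy : a * i ≤ b * y)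
    (hj : b * (a * (j - i - 1) ⌈/⌉ b) < a * (j - i)) (hya : y + a * (m - i - 1) ⌈/⌉ b = a) :
    Monotone (pairPath a b i j m y) := by
  have hc {n n' : ℕ} (h : n ≤ n') : a * n ⌈/⌉ b ≤ a * n' ⌈/⌉ b :=
    Nat.mul_ceilDiv_le_mul_ceilDiv a b h
  have hci : a * i ⌈/⌉ b ≤ y := (ceilDiv_le_iff_le_mul hb).2 hiy
  have hcj : a * (j - i - 1) ⌈/⌉ b < a * (j - i) ⌈/⌉ b :=
    lt_of_not_ge fun h => ((ceilDiv_le_iff_le_mul hb).1 h).not_gt hj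
  have hshift : Monotone fun u => a * (u + 1 - i) ⌈/⌉ b := fun u v h => hc (by omega)
  refine monotone_ite_lt (fun u v h => hc (by omega))
    (monotone_ite_lt (fun u v h => Nat.add_le_add_left (hshift h) _)
      (monotone_ite_lt (fun u v h => Nat.add_le_add_left (hshift h) _) monotone_const ?_) ?_) ?_
  · intro u hu
    have := hc (show u + 1 - i ≤ m - i - 1 by omega)
    omega
  · intro u hu
    have := hc (show u + 1 - i ≤ j - i - 1 by omega)
    rw [if_pos (by omega), show j - 1 + 1 - i = j - i by omega]
    omega
  · intro u hu
    have := hc (show u + 1 ≤ i by omega)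
    rw [if_pos (by omega)]
    omega

lemma mul_le_mul_pairPath (hb : 0 < b) (hij : i < j) (hjm : j ≤ m) (hiy : a * i ≤ b * y)
    (hu : u < b) :
    a * (u + 1) ≤ b * pairPath a b i j m y u := by
  rcases lt_or_ge u i with hui | hiu
  · rw [pairPath_of_lt hui]
    exact le_smul_ceilDiv hb
  have hline := mul_le_mul_add_ceilDiv hb hiy (show i ≤ u + 1 by omega)
  rcases lt_or_ge u (j - 1) with huj | hju
  · rw [pairPath_of_lt_pred hiu huj, add_right_comm]
    exact hline.trans (Nat.mul_le_mul_left b (by omega))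
  rcases lt_or_ge u (m - 1) with hum | hmu
  · rwa [pairPath_of_le_of_lt hij hju hum]
  · rw [pairPath_of_le hij hjm hmu, mul_comm b]
    exact Nat.mul_le_mul_left a hu

variable {D : DyckPath a b}

lemma bottomNorth_pairPath (hD : D.h = pairPath a b i j m y) (hb : 0 < b) (ha : 0 < a)
    (hij : i + 2 ≤ j) (hjb : j ≤ b) (hiy : a * i ≤ b * y) {y' : ℕ} (hyy' : y ≤ y')
    (hy' : y' ≤ y + 1) : BottomNorth a b D i y' := by
  refine ⟨by omega, ?_, ?_⟩
  · split_ifs with hi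
    · exact Nat.zero_le _
    rw [hD, pairPath_of_lt (by omega), Nat.sub_add_cancel (by omega)]
    exact ((ceilDiv_le_iff_le_mul hb).2 hiy).trans hyy'
  · have hc : 0 < a * 1 ⌈/⌉ b :=
      lt_of_not_ge fun h => by rw [ceilDiv_le_iff_le_mul hb] at h; omega
    rw [hD, pairPath_of_lt_pred le_rfl (by omega), Nat.add_sub_cancel_left]
    omega

lemma isLaserDiag_pairPath_left (hD : D.h = pairPath a b i j m y) (hcop : a.Coprime b)
    (hij : i + 2 ≤ j) (hjm : j < m) (hjb : j ≤ b) : IsLaserDiag a b D i (y + 1) j := by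
  have hb : 0 < b := by omega
  refine isLaserDiag_of_ceilDiv_le D hcop (by omega) hjb ?_ fun u hiu hu => ?_
  · have := Nat.mul_ceilDiv_lt_add (n := a * (j - i)) hb
    rw [hD, pairPath_of_le_of_lt (by omega) le_rfl (by omega), show j - 1 + 1 - i = j - i by omega,
      mul_add, mul_add, mul_one]
    omega
  · rw [hD, pairPath_of_lt_pred hiu (by omega)]

lemma isLaserDiag_pairPath_right (hD : D.h = pairPath a b i j m y) (hcop : a.Coprime b)
    (hij : i < j) (hjm : j < m) (hmb : m ≤ b) (hm : b * (a * (m - i - 1) ⌈/⌉ b) < a * (m - i))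
    (hya : y + a * (m - i - 1) ⌈/⌉ b = a) : IsLaserDiag a b D i y m := by
  refine isLaserDiag_of_ceilDiv_le D hcop (by omega) hmb ?_ fun u hiu hu => ?_
  · rw [hD, pairPath_of_le hij hjm.le le_rfl]
    calc b * a = b * y + b * (a * (m - i - 1) ⌈/⌉ b) := by rw [← mul_add, hya]
      _ < b * y + a * (m - i) := Nat.add_lt_add_left hm _
  · rw [hD]
    rcases lt_or_ge u (j - 1) with huj | hju
    · rw [pairPath_of_lt_pred hiu huj]
      omega
    · rw [pairPath_of_le_of_lt hij hju (by omega)]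

end pairPath

lemma exists_start_height {a b i m : ℕ} (him : i < m) (hmb : m ≤ b)
    (hm : b * (a * (m - i - 1) ⌈/⌉ b) < a * (m - i)) :
    ∃ y, 0 < y ∧ a * i ≤ b * y ∧ y + a * (m - i - 1) ⌈/⌉ b = a := by
  set c := a * (m - i - 1) ⌈/⌉ b
  have hma : a * m ≤ b * a := by rw [mul_comm b]; exact Nat.mul_le_mul_left a hmb
  have hsplit : a * i + a * (m - i) = a * m := by rw [← mul_add, Nat.add_sub_cancel' him.le]
  have hca : c < a := Nat.lt_of_mul_lt_mul_left (a := b) (by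
    have := Nat.mul_le_mul_left a (show m - i ≤ b by omega)
    rw [mul_comm a b] at this
    omega)
  refine ⟨a - c, by omega, ?_, Nat.sub_add_cancel hca.le⟩
  rw [Nat.mul_sub]
  omega

theorem pair_sharing_smaller_endpoint_mem_Ass_general (a b i j m : ℕ)
    (hcop : Nat.Coprime a b) (hjm : j < m)
    (h1 : Admissible a b (i, j)) (h2 : Admissible a b (i, m)) :
    ({(i, j), (i, m)} : Finset (ℕ × ℕ)) ∈ (Ass a b).faces := by
  obtain ⟨⟨hij, hjb, -⟩, hSj, -⟩ := h1
  obtain ⟨⟨-, hmb, -⟩, hSm, -⟩ := h2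
  have hb : 0 < b := by omega
  have hj : b * (a * (j - i - 1) ⌈/⌉ b) < a * (j - i) := by
    simpa [show j - i - 1 + 1 = j - i by omega] using mul_ceilDiv_lt_of_mem_Sab hb hSj
  have hm : b * (a * (m - i - 1) ⌈/⌉ b) < a * (m - i) := by
    simpa [show m - i - 1 + 1 = m - i by omega] using mul_ceilDiv_lt_of_mem_Sab hb hSm
  obtain ⟨y, hy, hiy, hya⟩ := exists_start_height (by omega) hmb hm
  let D : DyckPath a b :=
    ⟨pairPath a b i j m y, pairPath_monotone hb hij hjm hiy hj hya,
      fun u hu => pairPath_of_le (by omega) hjm.le (by omega),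
      fun u hu => mul_le_mul_pairPath hb (by omega) hjm.le hiy hu⟩
  refine ⟨D, fun d hd => ?_⟩
  rcases Finset.mem_insert.1 hd with rfl | hd
  · exact ⟨y + 1, bottomNorth_pairPath rfl hb (by omega) hij hjb hiy (by omega) le_rfl,
      by simp, isLaserDiag_pairPath_left rfl hcop hij hjm hjb⟩
  · rw [Finset.mem_singleton.1 hd]
    exact ⟨y, bottomNorth_pairPath rfl hb (by omega) hij hjb hiy le_rfl (by omega),
      by simp [hy.ne'], isLaserDiag_pairPath_right rfl hcop (by omega) hjm hmb hm hya⟩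

/-- Two `a,b`-admissible diagonals `ij` and `im` sharing their smaller endpoint
(`i < j < m`) form a face of `Ass(a,b)`. -/
theorem pair_sharing_smaller_endpoint_mem_Ass (a b i j m : ℕ) (ha : 0 < a) (hab : a < b)
    (hcop : Nat.Coprime a b) (hij : i < j) (hjm : j < m)
    (h1 : Admissible a b (i, j)) (h2 : Admissible a b (i, m)) :
    ({(i, j), (i, m)} : Finset (ℕ × ℕ)) ∈ (Ass a b).faces :=
  pair_sharing_smaller_endpoint_mem_Ass_general a b i j m hcop hjm h1 h2
end

section
/- Let a < b be coprime positive integers and let ij and km be a,b-admissible diagonals of P_{b+1} with i < j ≤ k < m. Then {ij, km} is a face of Ass(a,b), i.e., there exists an a,b-Dyck path D with {ij, km} ⊆ F(D). -/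
/-!
Write `j - i - 1 = ⌊pb/a⌋` and `m - k - 1 = ⌊rb/a⌋` with `1 ≤ p, r < a`. Then `pb < a(j - i)`
and `rb < a(m - k)`, so `y = a - p - r` is positive. Take the Dyck path that stays at height `y`
up to column `i`, climbs `p` units along the lowest staircase weakly above the laser of slope
`a/b` fired from `(i, y)`, stays at height `y + p` up to column `k`, climbs `r` units along the
staircase above the laser from `(k, y + p)`, and then stays at height `a`. Since `a` and `b` are
coprime, a laser meets no lattice point before travelling `b` columns, so it passes strictly
below every step of its staircase; and because `pb < a(j - i)` the laser from `(i, y)` clears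
the top of the staircase exactly over the column ending at `j`, giving the laser diagonal `ij`.
Likewise for `km`.
-/

/-- The heights, above its starting height, of the east steps over columns `x` of the lowest
staircase weakly above the laser of slope `a/b` fired from column `s`, truncated after climbing
`c` units (and `0` before column `s`). -/
def laserStair (a b s c x : ℕ) : ℕ := min c (a * (x + 1 - s) ⌈/⌉ b)

section LaserStair

variable {a b s c x : ℕ}

lemma laserStair_le : laserStair a b s c x ≤ c := min_le_left _ _

lemma laserStair_monotone : Monotone (laserStair a b s c) := fun _ _ hx =>
  min_le_min_left c <| Nat.div_le_div_right <| Nat.sub_le_sub_right (Nat.add_le_add_right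
    (Nat.mul_le_mul_left a (Nat.sub_le_sub_right (Nat.add_le_add_right hx 1) s)) b) 1

lemma laserStair_of_le (h : x + 1 ≤ s) : laserStair a b s c x = 0 := by
  simp [laserStair, Nat.sub_eq_zero_of_le h]

lemma laserStair_eq_ceilDiv (hb : 0 < b) (h : a * (x + 1 - s) ≤ c * b) :
    laserStair a b s c x = a * (x + 1 - s) ⌈/⌉ b :=
  min_eq_right <| (ceilDiv_le_iff_le_mul hb).2 (by rwa [mul_comm b])

lemma laserStair_eq_of_lt (hb : 0 < b) (h : c * b < a * (x + 1 - s)) :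
    laserStair a b s c x = c :=
  min_eq_left ((gc_mul_ceilDiv hb).lt_iff_lt.2 (by rwa [mul_comm b])).le

lemma laserStair_pos (ha : 0 < a) (hb : 0 < b) (hc : 0 < c) : 0 < laserStair a b s c s :=
  lt_min hc <| (gc_mul_ceilDiv hb).lt_iff_lt.2 (by simpa using ha)

lemma mul_succ_le_mul_add_laserStair {y : ℕ} (hb : 0 < b) (hs : a * s ≤ b * y)
    (hx : a * (x + 1) ≤ b * (y + c)) : a * (x + 1) ≤ b * (y + laserStair a b s c x) := by
  rcases min_choice c (a * (x + 1 - s) ⌈/⌉ b) with h | h <;> rw [laserStair, h]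
  · exact hx
  · have hstep : a * (x + 1 - s) ≤ b * (a * (x + 1 - s) ⌈/⌉ b) := le_smul_ceilDiv hb
    have hsplit : a * (x + 1) ≤ a * s + a * (x + 1 - s) := by
      rw [← mul_add]; exact Nat.mul_le_mul_left a (by omega)
    rw [mul_add b]; omega

end LaserStair

lemma lt_mul_ceilDiv_of_coprime {a b t : ℕ} (hcop : Nat.Coprime a b) (ht : 0 < t)
    (htb : t < b) :
    a * t < b * (a * t ⌈/⌉ b) := by
  refine (le_smul_ceilDiv (a := b) (by omega) : a * t ≤ b * _).lt_of_ne fun h => ?_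
  have : b ∣ t := hcop.symm.dvd_of_dvd_mul_left ⟨_, h⟩
  exact absurd (Nat.le_of_dvd ht this) (by omega)

lemma mul_pred_le_and_lt_mul_of_div_eq {a q n : ℕ} (ha : 0 < a) (hn : 0 < n)
    (h : q / a = n - 1) :
    a * (n - 1) ≤ q ∧ q < a * n := by
  refine ⟨h ▸ Nat.mul_div_le q a, ?_⟩
  have := Nat.lt_mul_div_succ q ha
  rwa [h, Nat.sub_add_cancel hn] at this

lemma exists_base_height {a b i j k m p r : ℕ} (hij : i < j) (hjk : j ≤ k) (hkm : k < m)
    (hmb : m ≤ b) (hp : p * b < a * (j - i)) (hr : r * b < a * (m - k)) :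
    ∃ y, y + p + r = a ∧ 0 < y ∧ a * i ≤ b * y ∧ a * k ≤ b * (y + p) := by
  have hik : a * i + a * (j - i) ≤ a * k := by
    rw [← mul_add]; exact Nat.mul_le_mul_left a (by omega)
  have hkb : a * k + a * (m - k) ≤ a * b := by
    rw [← mul_add]; exact Nat.mul_le_mul_left a (by omega)
  have hpr : p + r < a :=
    Nat.lt_of_mul_lt_mul_right (a := b) (by rw [add_mul]; linarith [Nat.zero_le (a * i)])
  refine ⟨a - p - r, by omega, by omega, ?_⟩
  have hfinal : b * (a - p - r) + b * p + b * r = b * a := by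
    rw [← mul_add, ← mul_add]; congr 1; omega
  constructor <;> linarith

section Laser

variable {a b : ℕ}

/-- If `D` follows the staircase of the laser from `(s, y)` from column `s - 1` on, and the laser
clears the top of the staircase (height `c`) exactly over the column ending at `k`, then `sk` is a
laser diagonal of `D`. -/
theorem mem_FD_of_laserStair {s k y c : ℕ} (D : DyckPath a b) (hcop : Nat.Coprime a b)
    (ha : 0 < a) (hc : 0 < c) (hsk : s < k) (hkb : k ≤ b) (hsy : (s, y) ≠ (0, 0))
    (hlen : a * (k - s - 1) ≤ c * b) (hcap : c * b < a * (k - s))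
    (hD : ∀ x, s ≤ x + 1 → x < k → D.h x = y + laserStair a b s c x) :
    (s, k) ∈ FD a b D := by
  have hb : 0 < b := by omega
  refine ⟨y, ⟨by omega, ?_, ?_⟩, hsy, hsk, hkb, ?_, fun u hsu huk => ?_⟩
  · split_ifs with hs0
    · exact Nat.zero_le y
    · rw [hD (s - 1) (by omega) (by omega), laserStair_of_le (by omega), add_zero]
  · rw [hD s (by omega) hsk]
    have := laserStair_pos (s := s) ha hb hc
    omega
  · calc b * D.h (k - 1) ≤ b * (y + c) := by
          rw [hD (k - 1) (by omega) (by omega)]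
          exact Nat.mul_le_mul_left b (Nat.add_le_add_left laserStair_le y)
      _ < b * y + a * (k - s) := by linarith [mul_add b y c, mul_comm b c]
  · dsimp only at hsu huk ⊢
    have hlow : a * (u + 1 - s) ≤ c * b :=
      (Nat.mul_le_mul_left a (by omega)).trans hlen
    rw [hD u (by omega) (by omega), laserStair_eq_ceilDiv hb hlow, mul_add b]
    have := lt_mul_ceilDiv_of_coprime hcop (t := u + 1 - s) (by omega) (by omega)
    omega

theorem exists_dyckPath_eq_laserStairs {i j k y p r : ℕ} (hb : 0 < b) (hy : y + p + r = a)
    (hiy : a * i ≤ b * y) (hky : a * k ≤ b * (y + p)) (hjk : j ≤ k) (hkb : k ≤ b)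
    (hp : p * b < a * (j - i)) :
    ∃ D : DyckPath a b, (∀ x < k, D.h x = y + laserStair a b i p x) ∧
      ∀ x, j ≤ x + 1 → D.h x = y + p + laserStair a b k r x := by
  have hlow : ∀ x < k, laserStair a b k r x = 0 := fun x hx => laserStair_of_le hx
  have hhigh : ∀ x, j ≤ x + 1 → laserStair a b i p x = p := fun x hx =>
    laserStair_eq_of_lt hb (hp.trans_le (Nat.mul_le_mul_left a (by omega)))
  have hfinal : b * (y + p) + b * r = b * a := by rw [← hy]; ring
  refine ⟨⟨fun x => y + laserStair a b i p x + laserStair a b k r x,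
      (monotone_const.add laserStair_monotone).add laserStair_monotone, fun x hx => ?_,
      fun x hx => ?_⟩,
    fun x hx => by simp only [hlow x hx, add_zero], fun x hx => by simp only [hhigh x hx]⟩
  · have hsplit : a * (b + 1) ≤ a * k + a * (x + 1 - k) := by
      rw [← mul_add]; exact Nat.mul_le_mul_left a (by omega)
    rw [hhigh x (by omega), laserStair_eq_of_lt hb (by rw [mul_add] at hsplit; nlinarith)]
    exact hy
  · rcases lt_or_ge x k with hxk | hxk
    · rw [hlow x hxk, add_zero]
      exact mul_succ_le_mul_add_laserStair hb hiy ((Nat.mul_le_mul_left a hxk).trans hky)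
    · rw [hhigh x (by omega)]
      refine mul_succ_le_mul_add_laserStair hb hky ?_
      rw [add_assoc y, ← add_assoc, hy, mul_comm b]
      exact Nat.mul_le_mul_left a hx

end Laser

/-- Two `a,b`-admissible diagonals `ij` and `km` with `i < j ≤ k < m` form a face of
`Ass(a,b)`. -/
theorem nested_pair_mem_Ass (a b i j k m : ℕ) (ha : 0 < a) (hab : a < b)
    (hcop : Nat.Coprime a b) (hij : i < j) (hjk : j ≤ k) (hkm : k < m)
    (h1 : Admissible a b (i, j)) (h2 : Admissible a b (k, m)) :
    ({(i, j), (k, m)} : Finset (ℕ × ℕ)) ∈ (Ass a b).faces := by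
  obtain ⟨⟨-, hjb, -⟩, hp, -⟩ := h1
  obtain ⟨⟨-, hmb, -⟩, hr, -⟩ := h2
  simp only [Sab, Finset.mem_image, Finset.mem_Icc] at hp hr
  obtain ⟨p, ⟨hp1, -⟩, hpj⟩ := hp
  obtain ⟨r, ⟨hr1, -⟩, hrm⟩ := hr
  obtain ⟨hlen_p, hcap_p⟩ := mul_pred_le_and_lt_mul_of_div_eq ha (by omega : 0 < j - i) hpj
  obtain ⟨hlen_r, hcap_r⟩ := mul_pred_le_and_lt_mul_of_div_eq ha (by omega : 0 < m - k) hrm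
  obtain ⟨y, hy, hy0, hiy, hky⟩ := exists_base_height hij hjk hkm hmb hcap_p hcap_r
  obtain ⟨D, hD1, hD2⟩ :=
    exists_dyckPath_eq_laserStairs (r := r) (by omega) hy hiy hky hjk (by omega) hcap_p
  refine ⟨D, ?_⟩
  simp only [Finset.mem_insert, Finset.mem_singleton, forall_eq_or_imp, forall_eq]
  exact ⟨mem_FD_of_laserStair D hcop ha hp1 hij hjb (by simp only [ne_eq, Prod.mk.injEq]; omega)
      hlen_p hcap_p fun x _ hx => hD1 x (hx.trans_le hjk),
    mem_FD_of_laserStair D hcop ha hr1 hkm hmb (by simp only [ne_eq, Prod.mk.injEq]; omega)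
      hlen_r hcap_r fun x hx _ => hD2 x (by omega)⟩
end
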